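/- arXiv:1609.00286 — 4 statements merged into one kernel-verified Lean document; each statement's English description precedes it below -/
import Mathlib

section
/- Let α>1, β>1, C₁>1. There exists a constant C' depending only on (α,β,C₁) such that for every positive nonincreasing sequence (κ_k)_{k≥1} satisfying κ_k ≤ C₁k^{−α} and κ_k − κ_{k+1} ≥ C₁^{−1}k^{−α−1} for all k ≥ 1, and every k ≥ 2, one has Σ_{ℓ≥1, ℓ≠k} ℓ^{−β}/|κ_k − κ_ℓ| ≤ C'·(1 + k^{α−β+1} log k). Moreover, if β > α+1, the same sum is bounded by C' uniformly in k ≥ 2. -/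
/-!
Telescoping the gap condition gives `κ_a - κ_b ≥ C₁⁻¹ (b - a) b^{-α-1}` for `1 ≤ a ≤ b`; combined
with monotonicity this yields `|κ_k - κ_ℓ| ≳ min(k, ℓ)^{-α}` once one index is at least twice the
other. Split the sum into three ranges. For `ℓ ≤ k/2` the terms are `≲ ℓ^{α-β}`. For
`k/2 < ℓ < 2k` they are `≲ k^{α+1-β} / |k - ℓ|`, a harmonic sum of size `k^{α+1-β} log k`. For
`ℓ ≥ 2k` they are `≲ k^α ℓ^{-β}`, whose tail is `≲ k^{α+1-β}` by the integral test. The first range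
contributes `≲ k^{α+1-β} log k` when `β ≤ α + 1`, and at most `∑ ℓ^{α-β} < ∞` when `β > α + 1`, in
which case `k^{α+1-β} log k` is bounded as well.
-/

open Finset Real

lemma sum_Icc_inv_le_one_add_log (n : ℕ) : ∑ j ∈ Icc 1 n, (j : ℝ)⁻¹ ≤ 1 + log n := by
  have h := harmonic_le_one_add_log n
  rw [harmonic_eq_sum_Icc] at h
  push_cast at h
  exact h

lemma sum_inv_le_one_add_log_of_injOn {s : Finset ℕ} {g : ℕ → ℕ} {n : ℕ}
    (hg : Set.InjOn g s) (hmaps : ∀ l ∈ s, g l ∈ Icc 1 n) :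
    ∑ l ∈ s, ((g l : ℕ) : ℝ)⁻¹ ≤ 1 + log n := by
  rw [← sum_image (f := fun j : ℕ => (j : ℝ)⁻¹) hg]
  refine (sum_le_sum_of_subset_of_nonneg ?_ fun _ _ _ => by positivity).trans
    (sum_Icc_inv_le_one_add_log n)
  simpa only [image_subset_iff] using hmaps

lemma sum_inv_abs_sub_le (k : ℕ) {s : Finset ℕ} (hs : ∀ l ∈ s, l ≠ k ∧ l ≤ 2 * k) :
    ∑ l ∈ s, |(k : ℝ) - l|⁻¹ ≤ 2 * (1 + log k) := by
  have habs (l : ℕ) : |(k : ℝ) - l| = (((k : ℤ) - l).natAbs : ℝ) := by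
    rw [Nat.cast_natAbs]; push_cast; rfl
  simp only [habs]
  rw [← sum_filter_add_sum_filter_not s (· < k), two_mul]
  gcongr
  · refine sum_inv_le_one_add_log_of_injOn (fun a ha b hb h => ?_) fun l hl => ?_
    · simp only [mem_coe, mem_filter] at ha hb; omega
    · simp only [mem_filter, mem_Icc] at hl ⊢; omega
  · refine sum_inv_le_one_add_log_of_injOn (fun a ha b hb h => ?_) fun l hl => ?_
    · simp only [mem_coe, mem_filter] at ha hb; omega
    · simp only [mem_filter, mem_Icc] at hl ⊢; have := hs l hl.1; omega

lemma sum_Icc_rpow_sub_one_le {e : ℝ} (he : 0 ≤ e) {n m : ℕ} (hnm : n ≤ m) :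
    ∑ l ∈ Icc 1 n, (l : ℝ) ^ (e - 1) ≤ (m : ℝ) ^ e * (1 + log m) := by
  calc ∑ l ∈ Icc 1 n, (l : ℝ) ^ (e - 1) ≤ ∑ l ∈ Icc 1 n, (m : ℝ) ^ e * (l : ℝ)⁻¹ := by
        refine sum_le_sum fun l hl => ?_
        rw [mem_Icc] at hl
        have hl0 : (0 : ℝ) < l := by exact_mod_cast hl.1
        have hlm : (l : ℝ) ≤ m := by exact_mod_cast hl.2.trans hnm
        rw [rpow_sub_one hl0.ne', div_eq_mul_inv]
        gcongr
    _ ≤ ∑ l ∈ Icc 1 m, (m : ℝ) ^ e * (l : ℝ)⁻¹ :=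
        sum_le_sum_of_subset_of_nonneg (Icc_subset_Icc_right hnm) fun _ _ _ => by positivity
    _ = (m : ℝ) ^ e * ∑ l ∈ Icc 1 m, (l : ℝ)⁻¹ := (mul_sum _ _ _).symm
    _ ≤ (m : ℝ) ^ e * (1 + log m) := by gcongr; exact sum_Icc_inv_le_one_add_log m

lemma tsum_nat_add_rpow_neg_le {s : ℝ} (hs : 1 < s) {N : ℕ} (hN : 2 ≤ N) :
    ∑' n : ℕ, ((n + N : ℕ) : ℝ) ^ (-s) ≤ ((N : ℝ) - 1) ^ (1 - s) / (s - 1) := by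
  obtain ⟨M, rfl⟩ : ∃ M, N = M + 1 := ⟨N - 1, by omega⟩
  have hM : (0 : ℝ) < M := by exact_mod_cast (by omega : 0 < M)
  have hint := AntitoneOn.tsum_comp_add_le_integral (f := fun x : ℝ => x ^ (-s)) M
    (fun x hx y _ hxy => rpow_le_rpow_of_nonpos (hM.trans_le hx) hxy (by linarith))
    (integrableOn_Ioi_rpow_of_lt (by linarith) hM) (fun x hx => rpow_nonneg (hM.trans hx).le _)
  rw [integral_Ioi_rpow_of_lt (by linarith) hM] at hint
  convert hint using 1
  · rfl
  rw [show ((M + 1 : ℕ) : ℝ) - 1 = M by push_cast; ring, show -s + 1 = 1 - s by ring, neg_div,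
    ← div_neg, neg_sub]

lemma rpow_neg_mul_one_add_log_le {δ x : ℝ} (hδ : 0 < δ) (hx : 1 ≤ x) :
    x ^ (-δ) * (1 + log x) ≤ 1 + δ⁻¹ := by
  have hx0 : 0 < x := by linarith
  have h1 : x ^ (-δ) ≤ 1 := rpow_le_one_of_one_le_of_nonpos hx (by linarith)
  have h2 : x ^ (-δ) * log x ≤ δ⁻¹ := by
    calc x ^ (-δ) * log x ≤ x ^ (-δ) * (x ^ δ / δ) := by
          gcongr; exact log_le_rpow_div hx0.le hδ
      _ = δ⁻¹ := by rw [rpow_neg hx0.le]; field_simp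
  linarith [mul_add (x ^ (-δ)) 1 (log x)]

def GapLowerBound (κ : ℕ → ℝ) (c γ : ℝ) : Prop :=
  ∀ j : ℕ, 1 ≤ j → c * (j : ℝ) ^ (-γ) ≤ κ j - κ (j + 1)

noncomputable def resolventTerm (κ : ℕ → ℝ) (β : ℝ) (k l : ℕ) : ℝ :=
  if 1 ≤ l ∧ l ≠ k then (l : ℝ) ^ (-β) / |κ k - κ l| else 0

lemma resolventTerm_nonneg (κ : ℕ → ℝ) (β : ℝ) (k l : ℕ) : 0 ≤ resolventTerm κ β k l := by
  unfold resolventTerm; split_ifs <;> positivity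

section GapLowerBound

variable {κ : ℕ → ℝ} {c γ β : ℝ}

lemma le_sub_of_gap (hc : 0 ≤ c) (hγ : 0 ≤ γ) (hgap : GapLowerBound κ c γ)
    {a b : ℕ} (ha : 1 ≤ a) (hab : a ≤ b) :
    c * ((b : ℝ) - a) * (b : ℝ) ^ (-γ) ≤ κ a - κ b := by
  induction b, hab using Nat.le_induction with
  | base => simp
  | succ b hab ih =>
    have hb : (0 : ℝ) < b := by exact_mod_cast ha.trans hab
    have hdecay : ((b + 1 : ℕ) : ℝ) ^ (-γ) ≤ (b : ℝ) ^ (-γ) :=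
      rpow_le_rpow_of_nonpos hb (by push_cast; linarith) (by linarith)
    have hba : (0 : ℝ) ≤ b - a := sub_nonneg.mpr (by exact_mod_cast hab)
    calc c * (((b + 1 : ℕ) : ℝ) - a) * ((b + 1 : ℕ) : ℝ) ^ (-γ)
        = c * ((b : ℝ) - a) * ((b + 1 : ℕ) : ℝ) ^ (-γ) + c * ((b + 1 : ℕ) : ℝ) ^ (-γ) := by
          push_cast; ring
      _ ≤ c * ((b : ℝ) - a) * (b : ℝ) ^ (-γ) + c * (b : ℝ) ^ (-γ) := by gcongr
      _ ≤ (κ a - κ b) + (κ b - κ (b + 1)) := add_le_add ih (hgap b (ha.trans hab))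
      _ = κ a - κ (b + 1) := by ring

lemma le_abs_sub_of_gap (hc : 0 ≤ c) (hγ : 0 ≤ γ) (hgap : GapLowerBound κ c γ)
    {k l : ℕ} (hk : 1 ≤ k) (hl : 1 ≤ l) (hlk : l ≤ 2 * k) :
    c * |(k : ℝ) - l| * (2 * (k : ℝ)) ^ (-γ) ≤ |κ k - κ l| := by
  rcases le_total l k with hle | hle
  · have hle' : (l : ℝ) ≤ k := by exact_mod_cast hle
    have hk0 : (0 : ℝ) < k := by exact_mod_cast hk
    calc c * |(k : ℝ) - l| * (2 * (k : ℝ)) ^ (-γ) ≤ c * ((k : ℝ) - l) * (k : ℝ) ^ (-γ) := by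
          rw [abs_of_nonneg (sub_nonneg.mpr hle')]
          exact mul_le_mul_of_nonneg_left
            (rpow_le_rpow_of_nonpos hk0 (by linarith) (by linarith))
            (mul_nonneg hc (sub_nonneg.mpr hle'))
      _ ≤ κ l - κ k := le_sub_of_gap hc hγ hgap hl hle
      _ ≤ |κ k - κ l| := by rw [abs_sub_comm]; exact le_abs_self _
  · have hle' : (k : ℝ) ≤ l := by exact_mod_cast hle
    have hl0 : (0 : ℝ) < l := by exact_mod_cast hl
    have hlk' : (l : ℝ) ≤ 2 * k := by exact_mod_cast hlk
    calc c * |(k : ℝ) - l| * (2 * (k : ℝ)) ^ (-γ) ≤ c * ((l : ℝ) - k) * (l : ℝ) ^ (-γ) := by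
          rw [abs_sub_comm, abs_of_nonneg (sub_nonneg.mpr hle')]
          exact mul_le_mul_of_nonneg_left (rpow_le_rpow_of_nonpos hl0 hlk' (by linarith))
            (mul_nonneg hc (sub_nonneg.mpr hle'))
      _ ≤ κ k - κ l := le_sub_of_gap hc hγ hgap hk hle
      _ ≤ |κ k - κ l| := le_abs_self _

lemma le_sub_of_gap_of_two_mul_le (hc : 0 ≤ c) (hγ : 0 ≤ γ) (hgap : GapLowerBound κ c γ)
    (hanti : AntitoneOn κ (Set.Ici 1)) {a b : ℕ} (ha : 1 ≤ a) (hab : 2 * a ≤ b) :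
    c * 2 ^ (-γ) * (a : ℝ) ^ (1 - γ) ≤ κ a - κ b := by
  have ha0 : (0 : ℝ) < a := by exact_mod_cast ha
  calc c * 2 ^ (-γ) * (a : ℝ) ^ (1 - γ)
      = c * (((2 * a : ℕ) : ℝ) - a) * ((2 * a : ℕ) : ℝ) ^ (-γ) := by
        push_cast
        rw [mul_rpow zero_le_two ha0.le, sub_eq_add_neg 1 γ, rpow_add ha0, rpow_one]
        ring
    _ ≤ κ a - κ (2 * a) := le_sub_of_gap hc hγ hgap ha (by omega)
    _ ≤ κ a - κ b := by
        linarith [hanti (Set.mem_Ici.mpr (by omega)) (Set.mem_Ici.mpr (by omega)) hab]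

lemma div_abs_sub_le_of_two_mul_le (hc : 0 < c) (hγ : 0 ≤ γ) (hgap : GapLowerBound κ c γ)
    (hanti : AntitoneOn κ (Set.Ici 1)) {a b : ℕ} (ha : 1 ≤ a) (hab : 2 * a ≤ b)
    {x : ℝ} (hx : 0 ≤ x) :
    x / |κ a - κ b| ≤ 2 ^ γ / c * (a : ℝ) ^ (γ - 1) * x := by
  have ha0 : (0 : ℝ) < a := by exact_mod_cast ha
  have hlow := le_sub_of_gap_of_two_mul_le hc.le hγ hgap hanti ha hab
  calc x / |κ a - κ b| ≤ x / (c * 2 ^ (-γ) * (a : ℝ) ^ (1 - γ)) :=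
        div_le_div_of_nonneg_left hx (by positivity) (hlow.trans (le_abs_self _))
    _ = 2 ^ γ / c * (a : ℝ) ^ (γ - 1) * x := by
        rw [show 1 - γ = -(γ - 1) by ring, rpow_neg ha0.le, rpow_neg zero_le_two]
        field_simp

lemma resolventTerm_le_of_two_mul_le_left (hc : 0 < c) (hγ : 0 ≤ γ)
    (hgap : GapLowerBound κ c γ) (hanti : AntitoneOn κ (Set.Ici 1))
    {k l : ℕ} (hl : 1 ≤ l) (hlk : 2 * l ≤ k) :
    resolventTerm κ β k l ≤ 2 ^ γ / c * (l : ℝ) ^ (γ - 1 - β) := by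
  have hl0 : (0 : ℝ) < l := by exact_mod_cast hl
  rw [resolventTerm, if_pos ⟨hl, by omega⟩, abs_sub_comm, sub_eq_add_neg (γ - 1), rpow_add hl0,
    ← mul_assoc]
  exact div_abs_sub_le_of_two_mul_le hc hγ hgap hanti hl hlk (by positivity)

lemma resolventTerm_le_of_two_mul_le_right (hc : 0 < c) (hγ : 0 ≤ γ)
    (hgap : GapLowerBound κ c γ) (hanti : AntitoneOn κ (Set.Ici 1))
    {k l : ℕ} (hk : 1 ≤ k) (hkl : 2 * k ≤ l) :
    resolventTerm κ β k l ≤ 2 ^ γ / c * (k : ℝ) ^ (γ - 1) * (l : ℝ) ^ (-β) := by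
  rw [resolventTerm, if_pos ⟨by omega, by omega⟩]
  exact div_abs_sub_le_of_two_mul_le hc hγ hgap hanti hk hkl (by positivity)

lemma resolventTerm_le_of_near (hc : 0 < c) (hγ : 0 ≤ γ) (hβ : 0 ≤ β)
    (hgap : GapLowerBound κ c γ) {k l : ℕ} (hkl : k ≤ 2 * l) (hlk : l ≤ 2 * k) (hne : l ≠ k) :
    resolventTerm κ β k l ≤ 2 ^ (β + γ) / c * (k : ℝ) ^ (γ - β) * |(k : ℝ) - l|⁻¹ := by
  have hk0 : (0 : ℝ) < k := by exact_mod_cast (by omega : 0 < k)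
  have hdist : 0 < |(k : ℝ) - l| := abs_pos.mpr (sub_ne_zero.mpr (by exact_mod_cast hne.symm))
  have hhalf : (k : ℝ) / 2 ≤ l := by
    rw [div_le_iff₀ two_pos]; exact_mod_cast (by omega : k ≤ l * 2)
  rw [resolventTerm, if_pos ⟨by omega, hne⟩]
  calc (l : ℝ) ^ (-β) / |κ k - κ l|
      ≤ (l : ℝ) ^ (-β) / (c * |(k : ℝ) - l| * (2 * (k : ℝ)) ^ (-γ)) :=
        div_le_div_of_nonneg_left (by positivity) (by positivity)
          (le_abs_sub_of_gap hc.le hγ hgap (by omega) (by omega) hlk)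
    _ ≤ ((k : ℝ) / 2) ^ (-β) / (c * |(k : ℝ) - l| * (2 * (k : ℝ)) ^ (-γ)) :=
        div_le_div_of_nonneg_right
          (rpow_le_rpow_of_nonpos (half_pos hk0) hhalf (by linarith)) (by positivity)
    _ = 2 ^ (β + γ) / c * (k : ℝ) ^ (γ - β) * |(k : ℝ) - l|⁻¹ := by
        rw [div_rpow hk0.le zero_le_two, mul_rpow zero_le_two hk0.le, rpow_add two_pos,
          rpow_sub hk0]
        simp only [rpow_neg hk0.le, rpow_neg zero_le_two]
        field_simp

lemma sum_range_resolventTerm_le (hc : 0 < c) (hγ : 0 ≤ γ) (hβ : 0 ≤ β)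
    (hgap : GapLowerBound κ c γ) (hanti : AntitoneOn κ (Set.Ici 1)) (k : ℕ) :
    ∑ l ∈ range (2 * k), resolventTerm κ β k l ≤
      2 ^ γ / c * ∑ l ∈ Icc 1 (k / 2), (l : ℝ) ^ (γ - 1 - β) +
        2 ^ γ / c * 2 ^ (β + 1) * (k : ℝ) ^ (γ - β) * (1 + log k) := by
  set far := Icc 1 (k / 2)
  set near := (Ioo (k / 2) (2 * k)).erase k
  have hsub : far ∪ near ⊆ range (2 * k) := by
    intro l; simp only [far, near, mem_union, mem_Icc, mem_erase, mem_Ioo, mem_range]; omega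
  have hvanish : ∀ l ∈ range (2 * k), l ∉ far ∪ near → resolventTerm κ β k l = 0 := by
    intro l hl hl'
    simp only [far, near, mem_union, mem_Icc, mem_erase, mem_Ioo, mem_range] at hl hl'
    rw [resolventTerm, if_neg (by omega)]
  have hdisj : Disjoint far near := by
    rw [disjoint_left]; intro l; simp only [far, near, mem_Icc, mem_erase, mem_Ioo]; omega
  rw [← sum_subset hsub hvanish, sum_union hdisj, mul_sum]
  gcongr with l hl
  · simp only [far, mem_Icc] at hl
    exact resolventTerm_le_of_two_mul_le_left hc hγ hgap hanti hl.1 (by omega)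
  · calc ∑ l ∈ near, resolventTerm κ β k l
        ≤ ∑ l ∈ near, 2 ^ (β + γ) / c * (k : ℝ) ^ (γ - β) * |(k : ℝ) - l|⁻¹ :=
          sum_le_sum fun l hl => by
            simp only [near, mem_erase, mem_Ioo] at hl
            exact resolventTerm_le_of_near hc hγ hβ hgap (by omega) (by omega) hl.1
      _ = 2 ^ (β + γ) / c * (k : ℝ) ^ (γ - β) * ∑ l ∈ near, |(k : ℝ) - l|⁻¹ :=
          (mul_sum _ _ _).symm
      _ ≤ 2 ^ (β + γ) / c * (k : ℝ) ^ (γ - β) * (2 * (1 + log k)) := by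
          gcongr
          exact sum_inv_abs_sub_le k fun l hl => by
            simp only [near, mem_erase, mem_Ioo] at hl; omega
      _ = 2 ^ γ / c * 2 ^ (β + 1) * (k : ℝ) ^ (γ - β) * (1 + log k) := by
          rw [rpow_add two_pos, rpow_add two_pos, rpow_one]; ring

lemma tsum_nat_add_resolventTerm_le (hc : 0 < c) (hγ : 0 ≤ γ) (hβ : 1 < β)
    (hgap : GapLowerBound κ c γ) (hanti : AntitoneOn κ (Set.Ici 1)) {k : ℕ} (hk : 1 ≤ k) :
    Summable (resolventTerm κ β k) ∧
      ∑' n, resolventTerm κ β k (n + 2 * k) ≤ 2 ^ γ / c * (β - 1)⁻¹ * (k : ℝ) ^ (γ - β) := by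
  have hk1 : (1 : ℝ) ≤ k := by exact_mod_cast hk
  have hterm : ∀ n, resolventTerm κ β k (n + 2 * k) ≤
      2 ^ γ / c * (k : ℝ) ^ (γ - 1) * ((n + 2 * k : ℕ) : ℝ) ^ (-β) := fun n =>
    resolventTerm_le_of_two_mul_le_right hc hγ hgap hanti hk (by omega)
  have hsummable_rpow : Summable fun n : ℕ => ((n + 2 * k : ℕ) : ℝ) ^ (-β) :=
    (summable_nat_add_iff (2 * k)).mpr (summable_nat_rpow.mpr (by linarith))
  have hsummable_tail : Summable fun n => resolventTerm κ β k (n + 2 * k) :=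
    (hsummable_rpow.mul_left _).of_nonneg_of_le (fun n => resolventTerm_nonneg κ β k _) hterm
  refine ⟨(summable_nat_add_iff (2 * k)).mp hsummable_tail, ?_⟩
  calc ∑' n, resolventTerm κ β k (n + 2 * k)
      ≤ ∑' n : ℕ, 2 ^ γ / c * (k : ℝ) ^ (γ - 1) * ((n + 2 * k : ℕ) : ℝ) ^ (-β) :=
        hsummable_tail.tsum_le_tsum hterm (hsummable_rpow.mul_left _)
    _ = 2 ^ γ / c * (k : ℝ) ^ (γ - 1) * ∑' n : ℕ, ((n + 2 * k : ℕ) : ℝ) ^ (-β) := tsum_mul_left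
    _ ≤ 2 ^ γ / c * (k : ℝ) ^ (γ - 1) * ((k : ℝ) ^ (1 - β) / (β - 1)) := by
        gcongr
        refine (tsum_nat_add_rpow_neg_le hβ (by omega)).trans
          (div_le_div_of_nonneg_right (rpow_le_rpow_of_nonpos (by linarith) ?_ (by linarith))
            (by linarith))
        push_cast; linarith
    _ = 2 ^ γ / c * (β - 1)⁻¹ * (k : ℝ) ^ (γ - β) := by
        rw [div_eq_mul_inv, show γ - β = γ - 1 + (1 - β) by ring, rpow_add (by linarith)]; ring

theorem summable_resolventTerm_and_tsum_le (hc : 0 < c) (hγ : 0 ≤ γ) (hβ : 1 < β)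
    (hgap : GapLowerBound κ c γ) (hanti : AntitoneOn κ (Set.Ici 1)) {k : ℕ} (hk : 1 ≤ k) :
    Summable (resolventTerm κ β k) ∧
      ∑' l, resolventTerm κ β k l ≤ 2 ^ γ / c * (∑ l ∈ Icc 1 (k / 2), (l : ℝ) ^ (γ - 1 - β) +
        (2 ^ (β + 1) + (β - 1)⁻¹) * (k : ℝ) ^ (γ - β) * (1 + log k)) := by
  have hβ1 : 0 < β - 1 := by linarith
  obtain ⟨hsummable, htail⟩ := tsum_nat_add_resolventTerm_le hc hγ hβ hgap hanti hk
  refine ⟨hsummable, ?_⟩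
  have hlog : 0 ≤ 2 ^ γ / c * (β - 1)⁻¹ * (k : ℝ) ^ (γ - β) * log k := by positivity
  rw [← hsummable.sum_add_tsum_nat_add (2 * k)]
  calc _ ≤ _ := add_le_add (sum_range_resolventTerm_le hc hγ (by linarith) hgap hanti k) htail
    _ ≤ _ := by linarith
theorem tsum_resolventTerm_le_of_le (hc : 0 < c) (hγ : 0 ≤ γ) (hβ : 1 < β) (hβγ : β ≤ γ)
    (hgap : GapLowerBound κ c γ) (hanti : AntitoneOn κ (Set.Ici 1)) {k : ℕ} (hk : 2 ≤ k) :
    ∑' l, resolventTerm κ β k l ≤ 2 ^ γ / c * (1 + 2 ^ (β + 1) + (β - 1)⁻¹) * (1 + (log 2)⁻¹) *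
      ((k : ℝ) ^ (γ - β) * log k) := by
  have hβ1 : 0 < β - 1 := by linarith
  have hfar : ∑ l ∈ Icc 1 (k / 2), (l : ℝ) ^ (γ - 1 - β) ≤ (k : ℝ) ^ (γ - β) * (1 + log k) := by
    rw [show γ - 1 - β = γ - β - 1 by ring]
    exact sum_Icc_rpow_sub_one_le (by linarith) (Nat.div_le_self k 2)
  have hone : 1 + log k ≤ (1 + (log 2)⁻¹) * log k := by
    have : 1 ≤ (log 2)⁻¹ * log k := by
      rw [inv_mul_eq_div, one_le_div (by positivity)]
      exact log_le_log two_pos (by exact_mod_cast hk)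
    linarith
  calc ∑' l, resolventTerm κ β k l
      ≤ 2 ^ γ / c * (∑ l ∈ Icc 1 (k / 2), (l : ℝ) ^ (γ - 1 - β) +
          (2 ^ (β + 1) + (β - 1)⁻¹) * (k : ℝ) ^ (γ - β) * (1 + log k)) :=
        (summable_resolventTerm_and_tsum_le hc hγ hβ hgap hanti (by omega)).2
    _ ≤ 2 ^ γ / c * ((k : ℝ) ^ (γ - β) * (1 + log k) +
          (2 ^ (β + 1) + (β - 1)⁻¹) * (k : ℝ) ^ (γ - β) * (1 + log k)) := by gcongr
    _ = 2 ^ γ / c * (1 + 2 ^ (β + 1) + (β - 1)⁻¹) * (k : ℝ) ^ (γ - β) * (1 + log k) := by ring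
    _ ≤ 2 ^ γ / c * (1 + 2 ^ (β + 1) + (β - 1)⁻¹) * (k : ℝ) ^ (γ - β) *
          ((1 + (log 2)⁻¹) * log k) := by gcongr
    _ = _ := by ring

theorem tsum_resolventTerm_le_of_lt (hc : 0 < c) (hγ : 0 ≤ γ) (hβ : 1 < β) (hγβ : γ < β)
    (hgap : GapLowerBound κ c γ) (hanti : AntitoneOn κ (Set.Ici 1)) {k : ℕ} (hk : 1 ≤ k) :
    ∑' l, resolventTerm κ β k l ≤ 2 ^ γ / c * (∑' l : ℕ, (l : ℝ) ^ (γ - 1 - β) +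
      (2 ^ (β + 1) + (β - 1)⁻¹) * (1 + (β - γ)⁻¹)) := by
  have hβ1 : 0 < β - 1 := by linarith
  have hfar : ∑ l ∈ Icc 1 (k / 2), (l : ℝ) ^ (γ - 1 - β) ≤ ∑' l : ℕ, (l : ℝ) ^ (γ - 1 - β) :=
    (summable_nat_rpow.mpr (by linarith)).sum_le_tsum _ fun _ _ => by positivity
  have hdecay : (k : ℝ) ^ (γ - β) * (1 + log k) ≤ 1 + (β - γ)⁻¹ := by
    rw [← neg_sub β γ]
    exact rpow_neg_mul_one_add_log_le (by linarith) (by exact_mod_cast hk)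
  calc ∑' l, resolventTerm κ β k l
      ≤ 2 ^ γ / c * (∑ l ∈ Icc 1 (k / 2), (l : ℝ) ^ (γ - 1 - β) +
          (2 ^ (β + 1) + (β - 1)⁻¹) * ((k : ℝ) ^ (γ - β) * (1 + log k))) := by
        rw [← mul_assoc]; exact (summable_resolventTerm_and_tsum_le hc hγ hβ hgap hanti hk).2
    _ ≤ _ := by gcongr

end GapLowerBound

/-- For `α > 1`, `β > 1`, `C₁ > 1`, there is a constant `C'` depending only on
`(α, β, C₁)` such that for every positive nonincreasing sequence `(κ_k)_{k ≥ 1}` with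
`κ_k ≤ C₁ k^{−α}` and `κ_k − κ_{k+1} ≥ C₁⁻¹ k^{−α−1}` for all `k ≥ 1`, and every `k ≥ 2`,
the sum `Σ_{ℓ ≥ 1, ℓ ≠ k} ℓ^{−β} / |κ_k − κ_ℓ|` is finite and bounded by
`C' (1 + k^{α−β+1} log k)`; moreover if `β > α + 1` it is bounded by `C'` uniformly. -/
theorem resolvent_sum_bound (α β C₁ : ℝ) (hα : 1 < α) (hβ : 1 < β) (hC₁ : 1 < C₁) :
    ∃ C' > 0, ∀ κ : ℕ → ℝ,
      (∀ k : ℕ, 1 ≤ k → 0 < κ k) →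
      (∀ k l : ℕ, 1 ≤ k → k ≤ l → κ l ≤ κ k) →
      (∀ k : ℕ, 1 ≤ k → κ k ≤ C₁ * (k : ℝ) ^ (-α)) →
      (∀ k : ℕ, 1 ≤ k → κ k - κ (k + 1) ≥ C₁⁻¹ * (k : ℝ) ^ (-α - 1)) →
      ∀ k : ℕ, 2 ≤ k →
        (Summable (fun l : ℕ =>
            if 1 ≤ l ∧ l ≠ k then (l : ℝ) ^ (-β) / |κ k - κ l| else 0) ∧
          (∑' l : ℕ, if 1 ≤ l ∧ l ≠ k then (l : ℝ) ^ (-β) / |κ k - κ l| else 0)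
            ≤ C' * (1 + (k : ℝ) ^ (α - β + 1) * Real.log k)) ∧
        (β > α + 1 →
          (∑' l : ℕ, if 1 ≤ l ∧ l ≠ k then (l : ℝ) ^ (-β) / |κ k - κ l| else 0)
            ≤ C') := by
  have hc : 0 < C₁⁻¹ := inv_pos.mpr (by linarith)
  have hγ : 0 ≤ α + 1 := by linarith
  have hβ1 : 0 < β - 1 := by linarith
  have hgap' {κ : ℕ → ℝ} (hgap : ∀ k : ℕ, 1 ≤ k → κ k - κ (k + 1) ≥ C₁⁻¹ * (k : ℝ) ^ (-α - 1)) :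
      GapLowerBound κ C₁⁻¹ (α + 1) := by
    simpa only [GapLowerBound, neg_add'] using hgap
  have hanti' {κ : ℕ → ℝ} (hanti : ∀ k l : ℕ, 1 ≤ k → k ≤ l → κ l ≤ κ k) :
      AntitoneOn κ (Set.Ici 1) := fun a ha _ _ hab => hanti a _ ha hab
  rcases le_or_gt β (α + 1) with hle | hlt
  · refine ⟨2 ^ (α + 1) / C₁⁻¹ * (1 + 2 ^ (β + 1) + (β - 1)⁻¹) * (1 + (log 2)⁻¹), by positivity,
      fun κ _ hanti _ hgap k hk => ⟨⟨?_, ?_⟩, fun h => absurd h (not_lt.mpr hle)⟩⟩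
    · exact (summable_resolventTerm_and_tsum_le hc hγ hβ (hgap' hgap) (hanti' hanti)
        (by omega)).1
    · refine (tsum_resolventTerm_le_of_le hc hγ hβ hle (hgap' hgap) (hanti' hanti) hk).trans ?_
      rw [show α + 1 - β = α - β + 1 by ring]
      have : 0 ≤ (k : ℝ) ^ (α - β + 1) * log k := by positivity
      gcongr
      linarith
  · have hδ : 0 < β - (α + 1) := by linarith
    have hS : 0 ≤ ∑' l : ℕ, (l : ℝ) ^ (α + 1 - 1 - β) := tsum_nonneg fun _ => by positivity
    refine ⟨2 ^ (α + 1) / C₁⁻¹ * (∑' l : ℕ, (l : ℝ) ^ (α + 1 - 1 - β) +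
      (2 ^ (β + 1) + (β - 1)⁻¹) * (1 + (β - (α + 1))⁻¹)), by positivity,
      fun κ _ hanti _ hgap k hk => ?_⟩
    have hbound := tsum_resolventTerm_le_of_lt hc hγ hβ hlt (hgap' hgap) (hanti' hanti)
      (by omega : 1 ≤ k)
    have : 0 ≤ (k : ℝ) ^ (α - β + 1) * log k := by positivity
    exact ⟨⟨(summable_resolventTerm_and_tsum_le hc hγ hβ (hgap' hgap) (hanti' hanti)
      (by omega)).1, hbound.trans (le_mul_of_one_le_right (by positivity) (by linarith))⟩,
      fun _ => hbound⟩
end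

section
/- Let α>1, β>1, C₁>1. There exists a constant C' depending only on (α,β,C₁) such that for every positive nonincreasing sequence (κ_k)_{k≥1} satisfying κ_k ≤ C₁k^{−α} and κ_k − κ_{k+1} ≥ C₁^{−1}k^{−α−1} for all k ≥ 1, and every k ≥ 2, one has Σ_{ℓ≥1, ℓ≠k} ℓ^{−β−α/2}/|κ_k − κ_ℓ|² ≤ C'·(1 + k^{3α/2−β+2}). -/
set_option maxHeartbeats 1000000

lemma aux_abs_sq_div_le {a g M x : ℝ} (hM : 0 ≤ M) (hg : 0 < g)
    (habs : g ≤ |x|) (h : a ≤ M * g ^ 2) : a / |x| ^ 2 ≤ M := by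
  have hx2 : (0:ℝ) < |x| ^ 2 := by
    have : 0 < |x| := lt_of_lt_of_le hg habs
    positivity
  rw [div_le_iff₀ hx2]
  have hsq : g ^ 2 ≤ |x| ^ 2 := pow_le_pow_left₀ hg.le habs 2
  nlinarith

lemma aux_one_add_rpow_bound {L K a e : ℝ} (hL : 1 ≤ L) (hLK : L ≤ K) (hae : a ≤ e) :
    L ^ a ≤ 1 + K ^ e := by
  have hK : 1 ≤ K := hL.trans hLK
  have hKe : 0 < K ^ e := Real.rpow_pos_of_pos (by linarith) e
  rcases le_or_gt a 0 with h | h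
  · have h1 : L ^ a ≤ 1 := Real.rpow_le_one_of_one_le_of_nonpos hL h
    linarith
  · calc L ^ a ≤ K ^ a := Real.rpow_le_rpow (by linarith) hLK h.le
      _ ≤ K ^ e := Real.rpow_le_rpow_of_exponent_le hK hae
      _ ≤ 1 + K ^ e := by linarith

/-- For `α > 1`, `β > 1`, `C₁ > 1`, there is a constant `C'` depending only on
`(α, β, C₁)` such that for every positive nonincreasing sequence `(κ_k)_{k ≥ 1}` with
`κ_k ≤ C₁ k^{−α}` and `κ_k − κ_{k+1} ≥ C₁⁻¹ k^{−α−1}` for all `k ≥ 1`, and every `k ≥ 2`,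
the sum `Σ_{ℓ ≥ 1, ℓ ≠ k} ℓ^{−β−α/2} / |κ_k − κ_ℓ|²` is finite and bounded by
`C' (1 + k^{3α/2−β+2})`. -/
theorem resolvent_square_sum_bound (α β C₁ : ℝ) (hα : 1 < α) (hβ : 1 < β) (hC₁ : 1 < C₁) :
    ∃ C' > 0, ∀ κ : ℕ → ℝ,
      (∀ k : ℕ, 1 ≤ k → 0 < κ k) →
      (∀ k l : ℕ, 1 ≤ k → k ≤ l → κ l ≤ κ k) →
      (∀ k : ℕ, 1 ≤ k → κ k ≤ C₁ * (k : ℝ) ^ (-α)) →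
      (∀ k : ℕ, 1 ≤ k → κ k - κ (k + 1) ≥ C₁⁻¹ * (k : ℝ) ^ (-α - 1)) →
      ∀ k : ℕ, 2 ≤ k →
        Summable (fun l : ℕ =>
            if 1 ≤ l ∧ l ≠ k then (l : ℝ) ^ (-β - α / 2) / |κ k - κ l| ^ 2 else 0) ∧
        (∑' l : ℕ, if 1 ≤ l ∧ l ≠ k then (l : ℝ) ^ (-β - α / 2) / |κ k - κ l| ^ 2 else 0)
          ≤ C' * (1 + (k : ℝ) ^ (3 * α / 2 - β + 2)) := by
  have hC₁0 : (0:ℝ) < C₁ := by linarith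
  set c : ℝ := C₁⁻¹ * (2:ℝ) ^ (-α - 1) with hc_def
  have hc0 : 0 < c := by positivity
  set D : ℝ := C₁ ^ 2 * ((2:ℝ) ^ (2*α+2) + (2:ℝ) ^ (β+α/2)) with hD_def
  have hD0 : 0 < D := by positivity
  clear_value c D
  have hcsq : c ^ 2 = C₁⁻¹ ^ 2 * (2:ℝ) ^ (-2*α-2) := by
    rw [hc_def, mul_pow]
    congr 1
    rw [← Real.rpow_natCast ((2:ℝ) ^ (-α-1)) 2, ← Real.rpow_mul (by norm_num)]
    congr 1
    push_cast
    ring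
  have hC2 : C₁ ^ 2 * C₁⁻¹ ^ 2 = 1 := by field_simp
  have hDc : 1 ≤ D * c ^ 2 := by
    have expand : D * c ^ 2
        = (C₁ ^ 2 * C₁⁻¹ ^ 2) * ((2:ℝ) ^ (2*α+2) * (2:ℝ) ^ (-2*α-2))
          + (C₁ ^ 2 * C₁⁻¹ ^ 2) * ((2:ℝ) ^ (β+α/2) * (2:ℝ) ^ (-2*α-2)) := by
      rw [hcsq, hD_def]; ring
    have h1 : ((2:ℝ) ^ (2*α+2)) * (2:ℝ) ^ (-2*α-2) = 1 := by
      rw [← Real.rpow_add (by norm_num : (0:ℝ) < 2)]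
      norm_num
    have hpos : 0 < (2:ℝ) ^ (β+α/2) * (2:ℝ) ^ (-2*α-2) := by positivity
    rw [expand, hC2, h1]
    linarith
  have hD2 : (2:ℝ) ^ (β+α/2) ≤ D * C₁⁻¹ ^ 2 := by
    have expand : D * C₁⁻¹ ^ 2
        = (C₁ ^ 2 * C₁⁻¹ ^ 2) * ((2:ℝ) ^ (2*α+2) + (2:ℝ) ^ (β+α/2)) := by
      rw [hD_def]; ring
    have hpos : 0 < (2:ℝ) ^ (2*α+2) := by positivity
    rw [expand, hC2]
    linarith
  have hSsum : Summable (fun n : ℕ => (n:ℝ) ^ (-(3:ℝ)/2)) :=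
    Real.summable_nat_rpow.mpr (by norm_num)
  have hTsum : Summable (fun n : ℕ => (((n:ℝ)+1) ^ 2)⁻¹) := by
    have h2 : Summable (fun n : ℕ => 1 / ((n:ℝ) ^ 2)) :=
      Real.summable_one_div_nat_pow.mpr one_lt_two
    have h3 := (summable_nat_add_iff 1).mpr h2
    apply h3.congr
    intro n; push_cast; rw [one_div]
  set S := ∑' n : ℕ, (n:ℝ) ^ (-(3:ℝ)/2) with hS_def
  set T := ∑' n : ℕ, (((n:ℝ)+1) ^ 2)⁻¹ with hT_def
  have hS0 : 0 ≤ S := tsum_nonneg (fun n => Real.rpow_nonneg (Nat.cast_nonneg n) _)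
  have hT0 : 0 ≤ T := tsum_nonneg (fun n => by positivity)
  clear_value S T
  refine ⟨D * (S + 2*T + 1), mul_pos hD0 (by linarith), ?_⟩
  intro κ hpos hmono hupper hgapH k hk
  have hk1 : 1 ≤ k := le_trans one_le_two hk
  have hK0 : (0:ℝ) < (k:ℝ) := by exact_mod_cast hk1
  have hK1 : (1:ℝ) ≤ (k:ℝ) := by exact_mod_cast hk1
  set K : ℝ := (k:ℝ) with hK_def
  set E : ℝ := 3 * α / 2 - β + 2 with hE_def
  clear_value K E
  have hKE : 0 < K ^ E := Real.rpow_pos_of_pos hK0 E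
  have hKE0 : (0:ℝ) < 1 + K ^ E := by linarith
  have hM0 : (0:ℝ) ≤ D * (1 + K ^ E) := by positivity
  -- gap lemma
  have gap : ∀ a b : ℕ, 1 ≤ a → a ≤ b →
      C₁⁻¹ * ((b:ℝ) - (a:ℝ)) * (b:ℝ) ^ (-α - 1) ≤ κ a - κ b := by
    intro a b ha hab
    induction b, hab using Nat.le_induction with
    | base => simp
    | succ b hab ih =>
      have hb1 : 1 ≤ b := le_trans ha hab
      have hb0 : (0:ℝ) < b := by exact_mod_cast hb1
      have hba : (a:ℝ) ≤ b := by exact_mod_cast hab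
      have hstep := hgapH b hb1
      have hmono2 : ((b:ℝ)+1) ^ (-α-1) ≤ (b:ℝ) ^ (-α-1) :=
        Real.rpow_le_rpow_of_nonpos hb0 (by linarith) (by linarith)
      have hC0 : (0:ℝ) ≤ C₁⁻¹ := by positivity
      have t1 : C₁⁻¹ * ((b:ℝ) - a) * ((b:ℝ)+1) ^ (-α-1)
          ≤ C₁⁻¹ * ((b:ℝ) - a) * (b:ℝ) ^ (-α-1) := by
        apply mul_le_mul_of_nonneg_left hmono2
        have h0 : (0:ℝ) ≤ (b:ℝ) - a := by linarith
        positivity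
      have t2 : C₁⁻¹ * ((b:ℝ)+1) ^ (-α-1) ≤ C₁⁻¹ * (b:ℝ) ^ (-α-1) :=
        mul_le_mul_of_nonneg_left hmono2 hC0
      have expand : C₁⁻¹ * (((b:ℝ)+1) - a) * ((b:ℝ)+1) ^ (-α-1)
          = C₁⁻¹ * ((b:ℝ) - a) * ((b:ℝ)+1) ^ (-α-1) + C₁⁻¹ * ((b:ℝ)+1) ^ (-α-1) := by ring
      push_cast
      rw [expand]
      have hstep' : C₁⁻¹ * (b:ℝ) ^ (-α-1) ≤ κ b - κ (b+1) := hstep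
      linarith
  -- the comparison function
  set q : ℕ → ℝ := fun l => if l = k then 0 else (((l:ℝ) - K) ^ 2)⁻¹ with hq_def
  clear_value q
  have hq0 : ∀ l, 0 ≤ q l := by
    intro l
    simp only [hq_def]
    split
    · exact le_refl 0
    · positivity
  have hqsum : Summable q := by
    rw [← summable_nat_add_iff (k+1)]
    apply hTsum.congr
    intro n
    simp only [hq_def]
    rw [if_neg (by omega)]
    have harg : ((n + (k+1) : ℕ) : ℝ) - K = (n:ℝ) + 1 := by
      rw [hK_def]; push_cast; ring
    rw [harg]
  -- KEY TERMWISE BOUND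
  have key : ∀ l : ℕ,
      (if 1 ≤ l ∧ l ≠ k then (l : ℝ) ^ (-β - α / 2) / |κ k - κ l| ^ 2 else 0)
        ≤ D * (1 + K ^ E) * ((l:ℝ) ^ (-(3:ℝ)/2) + q l) := by
    intro l
    by_cases hl : 1 ≤ l ∧ l ≠ k
    · rw [if_pos hl]
      obtain ⟨hl1, hlk⟩ := hl
      have hL0 : (0:ℝ) < (l:ℝ) := by exact_mod_cast hl1
      have hL1 : (1:ℝ) ≤ (l:ℝ) := by exact_mod_cast hl1
      set L : ℝ := (l:ℝ) with hL_def
      clear_value L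
      have hqval : q l = ((L - K) ^ 2)⁻¹ := by
        simp only [hq_def]; rw [if_neg hlk, hL_def]
      have hqnn : 0 ≤ ((L - K) ^ 2)⁻¹ := by positivity
      have hpnn : 0 ≤ L ^ (-(3:ℝ)/2) := Real.rpow_nonneg hL0.le _
      rcases lt_or_gt_of_ne hlk with hcase | hcase
      · -- l < k
        have hLK : L ≤ K := by rw [hL_def, hK_def]; exact_mod_cast hcase.le
        have hKL1 : L + 1 ≤ K := by
          rw [hL_def, hK_def]
          have h' : l + 1 ≤ k := hcase
          exact_mod_cast h'
        have habs0 : κ l - κ k ≤ |κ k - κ l| := by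
          rw [abs_sub_comm]; exact le_abs_self _
        rcases le_or_gt (2*l) k with h2 | h2
        · -- Regime A' : 2l ≤ k, gap ≥ c * L^(-α)
          have hgap1 := gap l (2*l) hl1 (by omega)
          have hcast : ((2*l : ℕ):ℝ) = 2*L := by rw [hL_def]; push_cast; ring
          rw [hcast, ← hL_def] at hgap1
          have hrw : C₁⁻¹ * (2*L - L) * (2*L) ^ (-α-1) = c * L ^ (-α) := by
            rw [Real.mul_rpow (by norm_num) hL0.le]
            have hmulL : L * L ^ (-α-1) = L ^ (-α) := by
              nth_rewrite 1 [← Real.rpow_one L]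
              rw [← Real.rpow_add hL0]
              congr 1; ring
            have h2LL : 2*L - L = L := by ring
            rw [h2LL, hc_def, ← hmulL]; ring
          rw [hrw] at hgap1
          have hmono1 : κ k ≤ κ (2*l) := hmono (2*l) k (by omega) h2
          have habs : c * L ^ (-α) ≤ |κ k - κ l| := by linarith
          have hg0 : 0 < c * L ^ (-α) := by positivity
          have hbd : L ^ (3*α/2 - β + 3/2) ≤ 1 + K ^ E :=
            aux_one_add_rpow_bound hL1 hLK (by rw [hE_def]; linarith)
          have core : L ^ (-β-α/2)
              ≤ (D * (1 + K ^ E) * L ^ (-(3:ℝ)/2)) * (c * L ^ (-α)) ^ 2 := by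
            have e2 : (L ^ (-α)) ^ 2 = L ^ (-(2*α)) := by
              rw [pow_two, ← Real.rpow_add hL0]; congr 1; ring
            have e3 : L ^ (-β-α/2)
                = (L ^ (-(3:ℝ)/2) * L ^ (-(2*α))) * L ^ (3*α/2 - β + 3/2) := by
              rw [← Real.rpow_add hL0, ← Real.rpow_add hL0]; congr 1; ring
            have hxnn : 0 ≤ L ^ (-(3:ℝ)/2) * L ^ (-(2*α)) := by positivity
            calc L ^ (-β-α/2)
                = (L ^ (-(3:ℝ)/2) * L ^ (-(2*α))) * L ^ (3*α/2-β+3/2) := e3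
              _ ≤ (L ^ (-(3:ℝ)/2) * L ^ (-(2*α))) * (1 + K ^ E) :=
                  mul_le_mul_of_nonneg_left hbd hxnn
              _ ≤ (D * c ^ 2) * ((L ^ (-(3:ℝ)/2) * L ^ (-(2*α))) * (1 + K ^ E)) :=
                  le_mul_of_one_le_left (by positivity) hDc
              _ = (D * (1 + K ^ E) * L ^ (-(3:ℝ)/2)) * (c * L ^ (-α)) ^ 2 := by
                  rw [mul_pow, e2]; ring
          have hstep := aux_abs_sq_div_le (by positivity) hg0 habs core
          calc L ^ (-β - α/2) / |κ k - κ l| ^ 2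
              ≤ D * (1 + K ^ E) * L ^ (-(3:ℝ)/2) := hstep
            _ ≤ D * (1 + K ^ E) * (L ^ (-(3:ℝ)/2) + q l) := by
                apply mul_le_mul_of_nonneg_left _ hM0
                rw [hqval]; linarith
        · -- Regime B' : k < 2l, l < k ; gap ≥ C₁⁻¹ (K-L) K^(-α-1)
          have hgap1 := gap l k hl1 hcase.le
          rw [← hK_def, ← hL_def] at hgap1
          have hKL0 : 0 < K - L := by linarith
          have habs : C₁⁻¹ * (K - L) * K ^ (-α-1) ≤ |κ k - κ l| := by linarith
          have hg0 : 0 < C₁⁻¹ * (K - L) * K ^ (-α-1) := by positivity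
          have hK2L : K ≤ 2 * L := by
            rw [hL_def, hK_def]
            have : k ≤ 2 * l := by omega
            exact_mod_cast this
          have core : L ^ (-β-α/2)
              ≤ (D * (1 + K ^ E) * ((L - K) ^ 2)⁻¹) * (C₁⁻¹ * (K - L) * K ^ (-α-1)) ^ 2 := by
            have gsq : (C₁⁻¹ * (K - L) * K ^ (-α-1)) ^ 2
                = C₁⁻¹ ^ 2 * (K - L) ^ 2 * K ^ (-2*α-2) := by
              rw [mul_pow, mul_pow, pow_two (K ^ (-α-1)), ← Real.rpow_add hK0]
              congr 2; ring
            have hcancel : ((L - K) ^ 2)⁻¹ * (K - L) ^ 2 = 1 := by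
              rw [show (K - L)^2 = (L - K)^2 by ring]
              exact inv_mul_cancel₀ (pow_ne_zero 2 (by intro h; rw [sub_eq_zero] at h; rw [h] at hKL0; linarith))
            -- L ≥ K/2
            have hhalf : K * (2:ℝ)⁻¹ ≤ L := by linarith
            have hhalf0 : 0 < K * (2:ℝ)⁻¹ := by positivity
            have step1 : L ^ (-β-α/2) ≤ (K * (2:ℝ)⁻¹) ^ (-β-α/2) :=
              Real.rpow_le_rpow_of_nonpos hhalf0 hhalf (by linarith)
            have step2 : (K * (2:ℝ)⁻¹) ^ (-β-α/2)
                = K ^ (-β-α/2) * (2:ℝ) ^ (β+α/2) := by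
              rw [Real.mul_rpow hK0.le (by norm_num)]
              congr 1
              rw [Real.inv_rpow (by norm_num), ← Real.rpow_neg (by norm_num)]
              congr 1; ring
            have step3 : K ^ (-β-α/2) = K ^ (-2*α-2) * K ^ E := by
              rw [← Real.rpow_add hK0, hE_def]; congr 1; ring
            have hKnn : 0 ≤ K ^ (-2*α-2) := Real.rpow_nonneg hK0.le _
            calc L ^ (-β-α/2)
                ≤ (K * (2:ℝ)⁻¹) ^ (-β-α/2) := step1
              _ = (2:ℝ) ^ (β+α/2) * (K ^ (-2*α-2) * K ^ E) := by
                  rw [step2, step3]; ring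
              _ ≤ (2:ℝ) ^ (β+α/2) * (K ^ (-2*α-2) * (1 + K ^ E)) := by
                  apply mul_le_mul_of_nonneg_left _ (by positivity)
                  apply mul_le_mul_of_nonneg_left (by linarith) hKnn
              _ ≤ (D * C₁⁻¹ ^ 2) * (K ^ (-2*α-2) * (1 + K ^ E)) := by
                  apply mul_le_mul_of_nonneg_right hD2 (by positivity)
              _ = (D * (1 + K ^ E) * ((L - K) ^ 2)⁻¹)
                    * (C₁⁻¹ ^ 2 * (K - L) ^ 2 * K ^ (-2*α-2)) := by
                  have expand : (D * (1 + K ^ E) * ((L - K) ^ 2)⁻¹)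
                      * (C₁⁻¹ ^ 2 * (K - L) ^ 2 * K ^ (-2*α-2))
                      = (D * C₁⁻¹ ^ 2) * (K ^ (-2*α-2) * (1 + K ^ E))
                        * (((L - K) ^ 2)⁻¹ * (K - L) ^ 2) := by ring
                  rw [expand, hcancel, mul_one]
              _ = (D * (1 + K ^ E) * ((L - K) ^ 2)⁻¹)
                    * (C₁⁻¹ * (K - L) * K ^ (-α-1)) ^ 2 := by rw [gsq]
          have hstep := aux_abs_sq_div_le (by positivity) hg0 habs core
          calc L ^ (-β - α/2) / |κ k - κ l| ^ 2
              ≤ D * (1 + K ^ E) * ((L - K) ^ 2)⁻¹ := hstep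
            _ ≤ D * (1 + K ^ E) * (L ^ (-(3:ℝ)/2) + q l) := by
                apply mul_le_mul_of_nonneg_left _ hM0
                rw [hqval]; linarith
      · -- k < l
        have hKL : K ≤ L := by rw [hL_def, hK_def]; exact_mod_cast hcase.le
        have hLK1 : K + 1 ≤ L := by
          rw [hL_def, hK_def]
          have h' : k + 1 ≤ l := hcase
          exact_mod_cast h'
        have habs0 : κ k - κ l ≤ |κ k - κ l| := le_abs_self _
        rcases le_or_gt l (2*k) with h2 | h2
        · -- Regime B : k < l ≤ 2k ; gap ≥ c (L-K) K^(-α-1)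
          have hgap1 := gap k l hk1 hcase.le
          rw [← hK_def, ← hL_def] at hgap1
          have hLK0 : 0 < L - K := by linarith
          have hL2K : L ≤ 2 * K := by
            rw [hL_def, hK_def]; exact_mod_cast h2
          have hcmp : c * (L - K) * K ^ (-α-1) ≤ C₁⁻¹ * (L - K) * L ^ (-α-1) := by
            have h2K : (2*K) ^ (-α-1) ≤ L ^ (-α-1) :=
              Real.rpow_le_rpow_of_nonpos hL0 hL2K (by linarith)
            have hsplit2 : (2*K) ^ (-α-1) = (2:ℝ) ^ (-α-1) * K ^ (-α-1) :=
              Real.mul_rpow (by norm_num) hK0.le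
            calc c * (L - K) * K ^ (-α-1)
                = (C₁⁻¹ * (L - K)) * ((2:ℝ) ^ (-α-1) * K ^ (-α-1)) := by
                  rw [hc_def]; ring
              _ = (C₁⁻¹ * (L - K)) * (2*K) ^ (-α-1) := by rw [hsplit2]
              _ ≤ (C₁⁻¹ * (L - K)) * L ^ (-α-1) := by
                  apply mul_le_mul_of_nonneg_left h2K
                  positivity
              _ = C₁⁻¹ * (L - K) * L ^ (-α-1) := by ring
          have habs : c * (L - K) * K ^ (-α-1) ≤ |κ k - κ l| := by linarith
          have hg0 : 0 < c * (L - K) * K ^ (-α-1) := by positivity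
          have core : L ^ (-β-α/2)
              ≤ (D * (1 + K ^ E) * ((L - K) ^ 2)⁻¹) * (c * (L - K) * K ^ (-α-1)) ^ 2 := by
            have gsq : (c * (L - K) * K ^ (-α-1)) ^ 2
                = c ^ 2 * (L - K) ^ 2 * K ^ (-2*α-2) := by
              rw [mul_pow, mul_pow, pow_two (K ^ (-α-1)), ← Real.rpow_add hK0]
              congr 2; ring
            have hcancel : ((L - K) ^ 2)⁻¹ * (L - K) ^ 2 = 1 :=
              inv_mul_cancel₀ (pow_ne_zero 2 (ne_of_gt hLK0))
            have step1 : L ^ (-β-α/2) ≤ K ^ (-β-α/2) :=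
              Real.rpow_le_rpow_of_nonpos hK0 hKL (by linarith)
            have step3 : K ^ (-β-α/2) = K ^ (-2*α-2) * K ^ E := by
              rw [← Real.rpow_add hK0, hE_def]; congr 1; ring
            have hKnn : 0 ≤ K ^ (-2*α-2) := Real.rpow_nonneg hK0.le _
            calc L ^ (-β-α/2)
                ≤ K ^ (-β-α/2) := step1
              _ = K ^ (-2*α-2) * K ^ E := step3
              _ ≤ K ^ (-2*α-2) * (1 + K ^ E) :=
                  mul_le_mul_of_nonneg_left (by linarith) hKnn
              _ ≤ (D * c ^ 2) * (K ^ (-2*α-2) * (1 + K ^ E)) :=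
                  le_mul_of_one_le_left (by positivity) hDc
              _ = (D * (1 + K ^ E) * ((L - K) ^ 2)⁻¹)
                    * (c ^ 2 * (L - K) ^ 2 * K ^ (-2*α-2)) := by
                  have expand : (D * (1 + K ^ E) * ((L - K) ^ 2)⁻¹)
                      * (c ^ 2 * (L - K) ^ 2 * K ^ (-2*α-2))
                      = (D * c ^ 2) * (K ^ (-2*α-2) * (1 + K ^ E))
                        * (((L - K) ^ 2)⁻¹ * (L - K) ^ 2) := by ring
                  rw [expand, hcancel, mul_one]
              _ = (D * (1 + K ^ E) * ((L - K) ^ 2)⁻¹)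
                    * (c * (L - K) * K ^ (-α-1)) ^ 2 := by rw [gsq]
          have hstep := aux_abs_sq_div_le (by positivity) hg0 habs core
          calc L ^ (-β - α/2) / |κ k - κ l| ^ 2
              ≤ D * (1 + K ^ E) * ((L - K) ^ 2)⁻¹ := hstep
            _ ≤ D * (1 + K ^ E) * (L ^ (-(3:ℝ)/2) + q l) := by
                apply mul_le_mul_of_nonneg_left _ hM0
                rw [hqval]; linarith
        · -- Regime A : l > 2k ; gap ≥ c * K^(-α)
          have hgap1 := gap k (2*k) hk1 (by omega)
          have hcast : ((2*k : ℕ):ℝ) = 2*K := by rw [hK_def]; push_cast; ring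
          rw [hcast, ← hK_def] at hgap1
          have hrw : C₁⁻¹ * (2*K - K) * (2*K) ^ (-α-1) = c * K ^ (-α) := by
            rw [Real.mul_rpow (by norm_num) hK0.le]
            have hmulK : K * K ^ (-α-1) = K ^ (-α) := by
              nth_rewrite 1 [← Real.rpow_one K]
              rw [← Real.rpow_add hK0]
              congr 1; ring
            have h2KK : 2*K - K = K := by ring
            rw [h2KK, hc_def, ← hmulK]; ring
          rw [hrw] at hgap1
          have hmono1 : κ l ≤ κ (2*k) := hmono (2*k) l (by omega) (by omega)
          have habs : c * K ^ (-α) ≤ |κ k - κ l| := by linarith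
          have hg0 : 0 < c * K ^ (-α) := by positivity
          have core : L ^ (-β-α/2)
              ≤ (D * (1 + K ^ E) * L ^ (-(3:ℝ)/2)) * (c * K ^ (-α)) ^ 2 := by
            have e2 : (K ^ (-α)) ^ 2 = K ^ (-(2*α)) := by
              rw [pow_two, ← Real.rpow_add hK0]; congr 1; ring
            have e3 : L ^ (-β-α/2) = L ^ (-(3:ℝ)/2) * L ^ (-β-α/2+3/2) := by
              rw [← Real.rpow_add hL0]; congr 1; ring
            have hcmp : L ^ (-β-α/2+3/2) ≤ K ^ (-β-α/2+3/2) :=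
              Real.rpow_le_rpow_of_nonpos hK0 hKL (by linarith)
            have hsplit2 : K ^ (-β-α/2+3/2) = K ^ (-(2*α)) * K ^ (3*α/2-β+3/2) := by
              rw [← Real.rpow_add hK0]; congr 1; ring
            have hbd : K ^ (3*α/2 - β + 3/2) ≤ 1 + K ^ E :=
              aux_one_add_rpow_bound hK1 le_rfl (by rw [hE_def]; linarith)
            have hKnn : 0 ≤ K ^ (-(2*α)) := Real.rpow_nonneg hK0.le _
            calc L ^ (-β-α/2)
                = L ^ (-(3:ℝ)/2) * L ^ (-β-α/2+3/2) := e3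
              _ ≤ L ^ (-(3:ℝ)/2) * K ^ (-β-α/2+3/2) :=
                  mul_le_mul_of_nonneg_left hcmp hpnn
              _ = L ^ (-(3:ℝ)/2) * (K ^ (-(2*α)) * K ^ (3*α/2-β+3/2)) := by
                  rw [hsplit2]
              _ ≤ L ^ (-(3:ℝ)/2) * (K ^ (-(2*α)) * (1 + K ^ E)) := by
                  apply mul_le_mul_of_nonneg_left _ hpnn
                  exact mul_le_mul_of_nonneg_left hbd hKnn
              _ ≤ (D * c ^ 2) * (L ^ (-(3:ℝ)/2) * (K ^ (-(2*α)) * (1 + K ^ E))) :=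
                  le_mul_of_one_le_left (by positivity) hDc
              _ = (D * (1 + K ^ E) * L ^ (-(3:ℝ)/2)) * (c * K ^ (-α)) ^ 2 := by
                  rw [mul_pow, e2]; ring
          have hstep := aux_abs_sq_div_le (by positivity) hg0 habs core
          calc L ^ (-β - α/2) / |κ k - κ l| ^ 2
              ≤ D * (1 + K ^ E) * L ^ (-(3:ℝ)/2) := hstep
            _ ≤ D * (1 + K ^ E) * (L ^ (-(3:ℝ)/2) + q l) := by
                apply mul_le_mul_of_nonneg_left _ hM0
                rw [hqval]; linarith
    · rw [if_neg hl]
      have h1 : 0 ≤ (l:ℝ) ^ (-(3:ℝ)/2) := Real.rpow_nonneg (Nat.cast_nonneg l) _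
      have h2 := hq0 l
      positivity
  -- summability
  have hG : Summable (fun l : ℕ => D * (1 + K ^ E) * ((l:ℝ) ^ (-(3:ℝ)/2) + q l)) :=
    (hSsum.add hqsum).mul_left _
  have hf0 : ∀ l : ℕ,
      0 ≤ (if 1 ≤ l ∧ l ≠ k then (l : ℝ) ^ (-β - α / 2) / |κ k - κ l| ^ 2 else 0) := by
    intro l
    split
    · positivity
    · exact le_refl 0
  have hfsum : Summable (fun l : ℕ =>
      if 1 ≤ l ∧ l ≠ k then (l : ℝ) ^ (-β - α / 2) / |κ k - κ l| ^ 2 else 0) :=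
    Summable.of_nonneg_of_le hf0 key hG
  refine ⟨hfsum, ?_⟩
  -- tsum of q bounded by 2T
  have hqT : ∑' l, q l ≤ 2 * T := by
    set q1 : ℕ → ℝ := fun l => if l < k then (((l:ℝ) - K) ^ 2)⁻¹ else 0 with hq1_def
    set q2 : ℕ → ℝ := fun l => if k < l then (((l:ℝ) - K) ^ 2)⁻¹ else 0 with hq2_def
    have hsplit : ∀ l, q l = q1 l + q2 l := by
      intro l
      simp only [hq_def, hq1_def, hq2_def]
      rcases lt_trichotomy l k with h | h | h
      · rw [if_neg (by omega), if_pos h, if_neg (by omega)]; ring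
      · rw [if_pos h, if_neg (by omega), if_neg (by omega)]; ring
      · rw [if_neg (by omega), if_neg (by omega), if_pos h]; ring
    have hq1sum : Summable q1 := by
      apply summable_of_ne_finset_zero (s := Finset.range k)
      intro l hl
      simp only [Finset.mem_range, not_lt] at hl
      simp only [hq1_def]
      rw [if_neg (by omega)]
    have hq2sum : Summable q2 := by
      rw [← summable_nat_add_iff (k+1)]
      apply hTsum.congr
      intro n
      simp only [hq2_def]
      rw [if_pos (by omega)]
      have harg : ((n + (k+1) : ℕ) : ℝ) - K = (n:ℝ) + 1 := by
        rw [hK_def]; push_cast; ring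
      rw [harg]
    have hq1T : ∑' l, q1 l ≤ T := by
      rw [tsum_eq_sum (s := Finset.range k)
        (by intro l hl
            simp only [Finset.mem_range, not_lt] at hl
            simp only [hq1_def]
            rw [if_neg (by omega)])]
      have hre : ∑ l ∈ Finset.range k, q1 l
          = ∑ l ∈ Finset.range k, (((l:ℝ)+1) ^ 2)⁻¹ := by
        rw [← Finset.sum_range_reflect (fun l => (((l:ℝ)+1) ^ 2)⁻¹) k]
        apply Finset.sum_congr rfl
        intro l hl
        simp only [Finset.mem_range] at hl
        simp only [hq1_def]
        rw [if_pos hl]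
        have harg : ((k - 1 - l : ℕ) : ℝ) + 1 = K - (l:ℝ) := by
          rw [hK_def]
          have h1 : l ≤ k - 1 := by omega
          push_cast [Nat.cast_sub h1, Nat.cast_sub (by omega : 1 ≤ k)]
          ring
        rw [harg]
        congr 1
        ring
      rw [hre, hT_def]
      exact Summable.sum_le_tsum _ (fun i _ => by positivity) hTsum
    have hq2T : ∑' l, q2 l ≤ T := by
      rw [← Summable.sum_add_tsum_nat_add (k+1) hq2sum]
      have hzero : ∑ i ∈ Finset.range (k+1), q2 i = 0 := by
        apply Finset.sum_eq_zero
        intro i hi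
        simp only [Finset.mem_range] at hi
        simp only [hq2_def]
        rw [if_neg (by omega)]
      rw [hzero, zero_add]
      have heq : ∀ n : ℕ, q2 (n + (k+1)) = (((n:ℝ)+1) ^ 2)⁻¹ := by
        intro n
        simp only [hq2_def]
        rw [if_pos (by omega)]
        have harg : ((n + (k+1) : ℕ) : ℝ) - K = (n:ℝ) + 1 := by
          rw [hK_def]; push_cast; ring
        rw [harg]
      rw [tsum_congr heq, hT_def]
    calc ∑' l, q l = ∑' l, (q1 l + q2 l) := tsum_congr hsplit
      _ = ∑' l, q1 l + ∑' l, q2 l := Summable.tsum_add hq1sum hq2sum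
      _ ≤ 2 * T := by linarith
  -- final tsum bound
  calc (∑' l : ℕ, if 1 ≤ l ∧ l ≠ k then (l : ℝ) ^ (-β - α / 2) / |κ k - κ l| ^ 2 else 0)
      ≤ ∑' l : ℕ, D * (1 + K ^ E) * ((l:ℝ) ^ (-(3:ℝ)/2) + q l) :=
        Summable.tsum_le_tsum key hfsum hG
    _ = D * (1 + K ^ E) * ∑' l : ℕ, ((l:ℝ) ^ (-(3:ℝ)/2) + q l) := tsum_mul_left
    _ = D * (1 + K ^ E) * (S + ∑' l, q l) := by
        rw [Summable.tsum_add hSsum hqsum, hS_def]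
    _ ≤ D * (1 + K ^ E) * (S + 2*T) := by
        apply mul_le_mul_of_nonneg_left _ hM0
        linarith
    _ ≤ D * (S + 2*T + 1) * (1 + K ^ E) := by nlinarith
end

section
/- Let {φ_k}_{k≥1} be an orthonormal basis of L²(I), let (κ_k)_{k≥1} be positive reals with Σ_k κ_k² < ∞ and κ_k → 0, let K = Σ_k κ_k φ_k⊗φ_k in L²(I²), let b ∈ L²(I²), and define C ∈ L²(I²) by C(t,s) = ∫_I K(t,u) b(s,u) du. For N ≥ 2 set b^N = b + φ₁⊗φ_N and C^N = C + κ_N φ_N⊗φ₁ (where (f⊗g)(t,s)=f(t)g(s)). Then: (1) ∫_I K(t,u) b^N(s,u) du = C^N(t,s) for almost every (s,t); (2) |||C^N − C||| = κ_N, so C^N → C in L²(I²) as N → ∞; and (3) |||b^N − b||| = 1 for every N. Hence recovering b from (K, C) is an ill-posed inverse problem. -/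
/-! The heart of the matter is that `K` acts on `φ_N` as multiplication by `κ_N`. For the partial
sums `S_M = Σ_{k<M} κ_k φ_k ⊗ φ_k` with `M > N` this is orthonormality, and it passes to the
`L²`-limit `K` by the Hilbert–Schmidt bound `‖∫ D(·,u) g(u) du‖₂ ≤ |||D||| ‖g‖₂`. Linearity then
gives (1), while the norms in (2) and (3) factor into norms of unit vectors `φ_k`. -/

open MeasureTheory Filter

noncomputable section

/-- Lebesgue measure on the unit interval `I = [0,1]`. -/
def μI : Measure ℝ := MeasureTheory.volume.restrict (Set.Icc 0 1)

/-- The `L²(I)` inner product `⟨f, g⟩ = ∫_I f g`. -/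
def ip (f g : ℝ → ℝ) : ℝ := ∫ t, f t * g t ∂μI

open Topology

section CauchySchwarz

variable {α : Type*} [MeasurableSpace α] {μ : Measure α} {f g : α → ℝ}

lemma MeasureTheory.MemLp.integrable_fun_mul (hf : MemLp f 2 μ) (hg : MemLp g 2 μ) :
    Integrable (fun x => f x * g x) μ :=
  hf.integrable_mul hg

lemma integral_mul_eq_inner_toLp (hf : MemLp f 2 μ) (hg : MemLp g 2 μ) :
    ∫ x, f x * g x ∂μ = inner ℝ (hf.toLp f) (hg.toLp g) := by
  rw [L2.inner_def]
  refine integral_congr_ae ?_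
  filter_upwards [hf.coeFn_toLp, hg.coeFn_toLp] with x hfx hgx
  simp [hfx, hgx, mul_comm]

lemma sq_integral_mul_le (hf : MemLp f 2 μ) (hg : MemLp g 2 μ) :
    (∫ x, f x * g x ∂μ) ^ 2 ≤ (∫ x, f x ^ 2 ∂μ) * ∫ x, g x ^ 2 ∂μ := by
  simp only [sq, integral_mul_eq_inner_toLp hf hg, integral_mul_eq_inner_toLp hf hf,
    integral_mul_eq_inner_toLp hg hg]
  exact real_inner_mul_inner_self_le _ _

end CauchySchwarz

section Prod

variable {α β : Type*} [MeasurableSpace α] [MeasurableSpace β] {μ : Measure α} {ν : Measure β}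

lemma MeasureTheory.MemLp.two_mul_prod {f : α → ℝ} {g : β → ℝ} (hf : MemLp f 2 μ)
    (hg : MemLp g 2 ν) : MemLp (fun p : α × β => f p.1 * g p.2) 2 (μ.prod ν) := by
  refine (memLp_two_iff_integrable_sq (hf.1.comp_fst.mul hg.1.comp_snd)).2 ?_
  simpa only [Pi.mul_apply, mul_pow] using hf.integrable_sq.mul_prod hg.integrable_sq

variable [SFinite μ] [SFinite ν]

lemma integral_prod_sq_mul (f : α → ℝ) (g : β → ℝ) :
    ∫ p, (f p.1 * g p.2) ^ 2 ∂μ.prod ν = (∫ x, f x ^ 2 ∂μ) * ∫ y, g y ^ 2 ∂ν := by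
  simp_rw [mul_pow]
  exact integral_prod_mul (fun x => f x ^ 2) (fun y => g y ^ 2)

lemma MeasureTheory.MemLp.ae_memLp_prodMk_left {F : α × β → ℝ} (hF : MemLp F 2 (μ.prod ν)) :
    ∀ᵐ x ∂μ, MemLp (fun y => F (x, y)) 2 ν := by
  filter_upwards [hF.1.prodMk_left, hF.integrable_sq.prod_right_ae] with x hmeas hsq
  exact (memLp_two_iff_integrable_sq hmeas).2 hsq

variable {F : α × β → ℝ} {g : β → ℝ}

lemma ae_sq_integral_mul_le (hF : MemLp F 2 (μ.prod ν)) (hg : MemLp g 2 ν) :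
    ∀ᵐ x ∂μ, (∫ y, F (x, y) * g y ∂ν) ^ 2 ≤ (∫ y, F (x, y) ^ 2 ∂ν) * ∫ y, g y ^ 2 ∂ν := by
  filter_upwards [hF.ae_memLp_prodMk_left] with x hx
  exact sq_integral_mul_le hx hg

lemma integrable_sq_integral_mul (hF : MemLp F 2 (μ.prod ν)) (hg : MemLp g 2 ν) :
    Integrable (fun x => (∫ y, F (x, y) * g y ∂ν) ^ 2) μ := by
  refine (hF.integrable_sq.integral_prod_left.mul_const (∫ y, g y ^ 2 ∂ν)).mono'
    ((hF.1.mul hg.1.comp_snd).integral_prod_right'.pow 2) ?_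
  filter_upwards [ae_sq_integral_mul_le hF hg] with x hx
  rwa [Real.norm_of_nonneg (sq_nonneg _)]

lemma integral_sq_integral_mul_le (hF : MemLp F 2 (μ.prod ν)) (hg : MemLp g 2 ν) :
    ∫ x, (∫ y, F (x, y) * g y ∂ν) ^ 2 ∂μ ≤ (∫ p, F p ^ 2 ∂μ.prod ν) * ∫ y, g y ^ 2 ∂ν := by
  rw [integral_prod _ hF.integrable_sq, ← integral_mul_const]
  exact integral_mono_of_nonneg (.of_forall fun _ => sq_nonneg _)
    (hF.integrable_sq.integral_prod_left.mul_const _) (ae_sq_integral_mul_le hF hg)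

lemma ae_integral_mul_eq_of_tendsto {S : ℕ → α × β → ℝ} (hF : MemLp F 2 (μ.prod ν))
    (hS : ∀ M, MemLp (S M) 2 (μ.prod ν))
    (hlim : Tendsto (fun M => ∫ p, (F p - S M p) ^ 2 ∂μ.prod ν) atTop (𝓝 0))
    (hg : MemLp g 2 ν) {G : α → ℝ}
    (hSG : ∀ᶠ M in atTop, ∀ᵐ x ∂μ, ∫ y, S M (x, y) * g y ∂ν = G x) :
    ∀ᵐ x ∂μ, ∫ y, F (x, y) * g y ∂ν = G x := by
  set e : α → ℝ := fun x => ∫ y, F (x, y) * g y ∂ν - G x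
  have he : ∀ M, (∀ᵐ x ∂μ, ∫ y, S M (x, y) * g y ∂ν = G x) →
      (fun x => e x ^ 2) =ᵐ[μ] fun x => (∫ y, (F - S M) (x, y) * g y ∂ν) ^ 2 := by
    intro M hM
    filter_upwards [hM, hF.ae_memLp_prodMk_left, (hS M).ae_memLp_prodMk_left] with x hx hFx hSx
    simp only [e, ← hx, Pi.sub_apply, sub_mul]
    rw [← integral_sub (hFx.integrable_fun_mul hg) (hSx.integrable_fun_mul hg)]
  obtain ⟨M₀, hM₀⟩ := hSG.exists
  have he_int : Integrable (fun x => e x ^ 2) μ :=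
    (integrable_sq_integral_mul (hF.sub (hS M₀)) hg).congr (he M₀ hM₀).symm
  have he_le : ∀ᶠ M in atTop,
      ∫ x, e x ^ 2 ∂μ ≤ (∫ p, (F p - S M p) ^ 2 ∂μ.prod ν) * ∫ y, g y ^ 2 ∂ν := by
    filter_upwards [hSG] with M hM
    rw [integral_congr_ae (he M hM)]
    exact integral_sq_integral_mul_le (hF.sub (hS M)) hg
  have he_zero : ∫ x, e x ^ 2 ∂μ = 0 := by
    refine le_antisymm ?_ (integral_nonneg fun _ => sq_nonneg _)
    simpa using ge_of_tendsto (hlim.mul_const _) he_le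
  filter_upwards [(integral_eq_zero_iff_of_nonneg (fun _ => sq_nonneg _) he_int).1 he_zero]
    with x hx
  exact sub_eq_zero.1 (pow_eq_zero_iff two_ne_zero |>.1 hx)

end Prod

section Orthonormal

variable {α : Type*} [MeasurableSpace α] {μ : Measure α} {φ : ℕ → α → ℝ}

lemma integral_sum_mul_eq_of_orthonormal (hφ : ∀ k, MemLp (φ k) 2 μ)
    (hon : ∀ j k, ∫ x, φ j x * φ k x ∂μ = if j = k then 1 else 0) (c : ℕ → ℝ) {N M : ℕ}
    (hNM : N < M) : ∫ x, (∑ k ∈ Finset.range M, c k * φ k x) * φ N x ∂μ = c N := by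
  simp_rw [Finset.sum_mul, mul_assoc]
  rw [integral_finsetSum _ fun k _ => ((hφ k).integrable_fun_mul (hφ N)).const_mul (c k)]
  simp_rw [integral_const_mul, hon, mul_ite, mul_one, mul_zero]
  simp [Finset.mem_range.2 hNM]

lemma ae_integral_mul_eigenfunction_eq [SFinite μ] (hφ : ∀ k, MemLp (φ k) 2 μ)
    (hon : ∀ j k, ∫ x, φ j x * φ k x ∂μ = if j = k then 1 else 0) (κ : ℕ → ℝ)
    {K : α → α → ℝ} (hK : MemLp (fun p : α × α => K p.1 p.2) 2 (μ.prod μ))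
    (hexp : Tendsto
      (fun M => ∫ p, (K p.1 p.2 - ∑ k ∈ Finset.range M, κ k * φ k p.1 * φ k p.2) ^ 2
        ∂μ.prod μ) atTop (𝓝 0))
    (N : ℕ) : ∀ᵐ t ∂μ, ∫ u, K t u * φ N u ∂μ = κ N * φ N t := by
  refine ae_integral_mul_eq_of_tendsto hK (fun M => ?_) hexp (hφ N) ?_
  · exact memLp_finsetSum _ fun k _ => ((hφ k).const_mul (κ k)).two_mul_prod (hφ k)
  · filter_upwards [eventually_gt_atTop N] with M hM
    exact .of_forall fun t =>
      integral_sum_mul_eq_of_orthonormal hφ hon (fun k => κ k * φ k t) hM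

end Orthonormal

instance : SFinite μI := by
  unfold μI
  infer_instance

theorem ill_posedness_general
    (φ : ℕ → ℝ → ℝ)
    (hφL2 : ∀ k, MemLp (φ k) 2 μI)
    (hφon : ∀ j k, ip (φ j) (φ k) = if j = k then 1 else 0)
    (κ : ℕ → ℝ) (hκpos : ∀ k, 0 < κ k)
    (hκ0 : Tendsto κ atTop (nhds 0))
    (K : ℝ → ℝ → ℝ)
    (hKL2 : MemLp (fun p : ℝ × ℝ => K p.1 p.2) 2 (μI.prod μI))
    (hKexp : Tendsto
      (fun N => ∫ p, (K p.1 p.2 - ∑ k ∈ Finset.range N, κ k * φ k p.1 * φ k p.2) ^ 2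
        ∂(μI.prod μI)) atTop (nhds 0))
    (b : ℝ → ℝ → ℝ)
    (hbL2 : MemLp (fun p : ℝ × ℝ => b p.1 p.2) 2 (μI.prod μI)) :
    (∀ N : ℕ, 1 ≤ N → ∀ᵐ p ∂(μI.prod μI),
      (∫ u, K p.2 u * (b p.1 u + φ 0 p.1 * φ N u) ∂μI)
        = (∫ u, K p.2 u * b p.1 u ∂μI) + κ N * φ N p.2 * φ 0 p.1) ∧
    (∀ N : ℕ, Real.sqrt (∫ p, (κ N * φ N p.2 * φ 0 p.1) ^ 2 ∂(μI.prod μI)) = κ N) ∧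
    Tendsto (fun N => ∫ p, (κ N * φ N p.2 * φ 0 p.1) ^ 2 ∂(μI.prod μI))
      atTop (nhds 0) ∧
    (∀ N : ℕ, Real.sqrt (∫ p, (φ 0 p.1 * φ N p.2) ^ 2 ∂(μI.prod μI)) = 1) := by
  have hnorm : ∀ k, ∫ x, φ k x ^ 2 ∂μI = 1 := fun k => by simpa [ip, sq] using hφon k k
  have hCN : ∀ N, ∫ p, (κ N * φ N p.2 * φ 0 p.1) ^ 2 ∂(μI.prod μI) = κ N ^ 2 := fun N => by
    simp_rw [mul_comm (κ N * _) (φ 0 _)]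
    rw [integral_prod_sq_mul (φ 0) fun y => κ N * φ N y, hnorm, one_mul]
    simp_rw [mul_pow, integral_const_mul, hnorm, mul_one]
  refine ⟨fun N _ => ?_, fun N => by rw [hCN, Real.sqrt_sq (hκpos N).le], ?_, fun N => ?_⟩
  · have heig := ae_integral_mul_eigenfunction_eq hφL2 hφon κ hKL2 hKexp N
    filter_upwards [Measure.quasiMeasurePreserving_snd.ae (heig.and hKL2.ae_memLp_prodMk_left),
      Measure.quasiMeasurePreserving_fst.ae hbL2.ae_memLp_prodMk_left] with p ⟨hKφ, hKp⟩ hbp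
    simp_rw [mul_add, mul_left_comm _ (φ 0 p.1)]
    rw [integral_add (hKp.integrable_fun_mul hbp) ((hKp.integrable_fun_mul (hφL2 N)).const_mul _),
      integral_const_mul, hKφ]
    ring
  · simp_rw [hCN]
    simpa using hκ0.pow 2
  · rw [integral_prod_sq_mul (φ 0) (φ N), hnorm, hnorm, one_mul, Real.sqrt_one]

/-- Ill-posedness of recovering `b` from `(K, C)`: with `K = Σ_k κ_k φ_k ⊗ φ_k` in
`L²(I²)` (`{φ_k}` an orthonormal basis, `κ_k > 0`, `Σ κ_k² < ∞`, `κ_k → 0`),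
`C(t,s) = ∫ K(t,u) b(s,u) du`, and the perturbations `b^N = b + φ₁ ⊗ φ_N`,
`C^N = C + κ_N φ_N ⊗ φ₁` (here `φ₁` is `φ 0`), one has:
(1) `∫ K(t,u) b^N(s,u) du = C^N(t,s)` a.e.;
(2) `|||C^N − C||| = κ_N`, so `C^N → C` in `L²(I²)`;
(3) `|||b^N − b||| = 1` for every `N`. -/
theorem ill_posedness
    (φ : ℕ → ℝ → ℝ)
    (hφmeas : ∀ k, Measurable (φ k))
    (hφL2 : ∀ k, MemLp (φ k) 2 μI)
    (hφon : ∀ j k, ip (φ j) (φ k) = if j = k then 1 else 0)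
    (hφcomplete : ∀ f : ℝ → ℝ, Measurable f → MemLp f 2 μI →
      (∑' k, (ip f (φ k)) ^ 2) = ∫ t, (f t) ^ 2 ∂μI)
    (κ : ℕ → ℝ) (hκpos : ∀ k, 0 < κ k)
    (hκ2 : Summable (fun k => κ k ^ 2))
    (hκ0 : Tendsto κ atTop (nhds 0))
    (K : ℝ → ℝ → ℝ)
    (hKmeas : Measurable (fun p : ℝ × ℝ => K p.1 p.2))
    (hKL2 : MemLp (fun p : ℝ × ℝ => K p.1 p.2) 2 (μI.prod μI))
    (hKexp : Tendsto
      (fun N => ∫ p, (K p.1 p.2 - ∑ k ∈ Finset.range N, κ k * φ k p.1 * φ k p.2) ^ 2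
        ∂(μI.prod μI)) atTop (nhds 0))
    (b : ℝ → ℝ → ℝ)
    (hbmeas : Measurable (fun p : ℝ × ℝ => b p.1 p.2))
    (hbL2 : MemLp (fun p : ℝ × ℝ => b p.1 p.2) 2 (μI.prod μI)) :
    (∀ N : ℕ, 1 ≤ N → ∀ᵐ p ∂(μI.prod μI),
      (∫ u, K p.2 u * (b p.1 u + φ 0 p.1 * φ N u) ∂μI)
        = (∫ u, K p.2 u * b p.1 u ∂μI) + κ N * φ N p.2 * φ 0 p.1) ∧
    (∀ N : ℕ, Real.sqrt (∫ p, (κ N * φ N p.2 * φ 0 p.1) ^ 2 ∂(μI.prod μI)) = κ N) ∧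
    Tendsto (fun N => ∫ p, (κ N * φ N p.2 * φ 0 p.1) ^ 2 ∂(μI.prod μI))
      atTop (nhds 0) ∧
    (∀ N : ℕ, Real.sqrt (∫ p, (φ 0 p.1 * φ N p.2) ^ 2 ∂(μI.prod μI)) = 1) :=
  ill_posedness_general φ hφL2 hφon κ hκpos hκ0 K hKL2 hKexp b hbL2

end
end

section
/- Let (X,Y) be a pair of L²(I)-valued random variables with E‖X‖² < ∞ and E‖Y‖² < ∞ satisfying the functional linear model E(Y|X)(s) = E{Y(s)} + ∫_I b(s,t)[X(t)−E{X(t)}]dt with b ∈ L²(I²). Let K(s,t)=Cov{X(s),X(t)} have spectral expansion K = Σ_k κ_k φ_k⊗φ_k with κ_k>0 and {φ_k} an orthonormal basis of L²(I) of eigenfunctions, set ξ_k = ⟨X−E[X],φ_k⟩ and b_{j,k} = ∬ b·(φ_j⊗φ_k). Then for every k: the Bochner expectation E[ξ_k Y] ∈ L²(I) equals κ_k Σ_{j≥1} b_{j,k} φ_j (the series converging in L²(I)); consequently b = Σ_{k≥1} κ_k^{−1} E[ξ_k Y] ⊗ φ_k in L²(I²). -/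
open MeasureTheory Filter

noncomputable section

instance inst_s17 : SFinite μI := inferInstanceAs (SFinite (volume.restrict _))

/-!
Write `ξ_k = ⟨X - EX, φ_k⟩` and `g_k(s) = ∫ b(s,t) φ_k(t) dt`, so that `b_{j,k} = ⟨g_k, φ_j⟩`.
Test `E[ξ_k Y]` against `φ_j` and insert the model. The mean `EY` contributes nothing because
`E ξ_k = 0`; the error contributes nothing because `ξ_k` is a function of `X` and `E(𝓔 | X) = 0`;
the linear term gives `κ_k ⟨g_k, φ_j⟩`, because `E[ξ_k (X(t) - EX(t))] = (K φ_k)(t) = κ_k φ_k(t)`.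
By completeness `E[ξ_k Y] = κ_k g_k`, and both claims become Parseval's identity: for `g_k`, and
for `b(s, ·)` at almost every `s`, integrated in `s` by dominated convergence. Every interchange of
`E` and `∫_I` is Fubini on `Ω × I` for a product of two square-integrable functions.
-/

open Finset Function

namespace FunctionalLinearModel

section L2

variable {α β γ : Type*} [MeasurableSpace α] [MeasurableSpace β] [MeasurableSpace γ]
  {μ : Measure α} {ν : Measure β} {ρ : Measure γ}

theorem integrable_mul_of_memLp_two {f g : α → ℝ} (hf : MemLp f 2 μ) (hg : MemLp g 2 μ) :
    Integrable (fun x => f x * g x) μ :=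
  hf.integrable_mul hg

theorem sq_integral_mul_le {f g : α → ℝ} (hf : MemLp f 2 μ) (hg : MemLp g 2 μ) :
    (∫ x, f x * g x ∂μ) ^ 2 ≤ (∫ x, f x ^ 2 ∂μ) * ∫ x, g x ^ 2 ∂μ := by
  have inner_toLp : ∀ {u v : α → ℝ} (hu : MemLp u 2 μ) (hv : MemLp v 2 μ),
      inner ℝ (hu.toLp u) (hv.toLp v) = ∫ x, u x * v x ∂μ := by
    intro u v hu hv
    rw [L2.inner_def]
    refine integral_congr_ae ?_
    filter_upwards [hu.coeFn_toLp, hv.coeFn_toLp] with x hux hvx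
    simp [hux, hvx, mul_comm]
  simpa only [inner_toLp, sq] using real_inner_mul_inner_self_le (hf.toLp f) (hg.toLp g)

theorem integral_mul_eq_add_of_ae_eq {y a c e h : β → ℝ} (hy : MemLp y 2 ν) (ha : MemLp a 2 ν)
    (hc : MemLp c 2 ν) (hh : MemLp h 2 ν) (hyace : ∀ᵐ s ∂ν, y s = a s + c s + e s) :
    ∫ s, y s * h s ∂ν = ∫ s, a s * h s ∂ν + ∫ s, c s * h s ∂ν + ∫ s, e s * h s ∂ν := by
  have he : MemLp e 2 ν := ((hy.sub ha).sub hc).ae_eq <| by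
    filter_upwards [hyace] with s hs
    simp only [Pi.sub_apply, hs]
    ring
  have hah := integrable_mul_of_memLp_two ha hh
  have hch := integrable_mul_of_memLp_two hc hh
  calc ∫ s, y s * h s ∂ν = ∫ s, (a s * h s + c s * h s) + e s * h s ∂ν := by
        refine integral_congr_ae ?_
        filter_upwards [hyace] with s hs
        rw [hs]
        ring
    _ = _ := by
      rw [integral_add (f := fun s => a s * h s + c s * h s) (hah.add hch)
        (integrable_mul_of_memLp_two he hh),
        integral_add hah hch]

theorem memLp_two_mul_prod {f : α → ℝ} {g : β → ℝ} (hf : MemLp f 2 μ) (hg : MemLp g 2 ν) :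
    MemLp (fun p : α × β => f p.1 * g p.2) 2 (μ.prod ν) := by
  refine (memLp_two_iff_integrable_sq (f := fun p : α × β => f p.1 * g p.2)
    (hf.1.comp_fst.mul hg.1.comp_snd)).2 ?_
  simpa only [mul_pow] using hf.integrable_sq.mul_prod hg.integrable_sq

theorem memLp_two_uncurry_iff [SFinite ν] {F : α → β → ℝ}
    (hF : AEStronglyMeasurable (uncurry F) (μ.prod ν)) :
    MemLp (uncurry F) 2 (μ.prod ν) ↔
      (∀ᵐ a ∂μ, MemLp (F a) 2 ν) ∧ Integrable (fun a => ∫ b, F a b ^ 2 ∂ν) μ := by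
  have hF2 : AEStronglyMeasurable (fun p => uncurry F p ^ 2) (μ.prod ν) := hF.pow 2
  rw [memLp_two_iff_integrable_sq hF, integrable_prod_iff hF2]
  simp only [uncurry_apply_pair, Real.norm_eq_abs, abs_pow, sq_abs]
  refine and_congr_left fun _ => eventually_congr ?_
  filter_upwards [hF.prodMk_left] with a ha
  exact (memLp_two_iff_integrable_sq ha).symm

theorem _root_.MeasureTheory.MemLp.ae_memLp_slice [SFinite ν] {F : α → β → ℝ}
    (hF : MemLp (uncurry F) 2 (μ.prod ν)) : ∀ᵐ a ∂μ, MemLp (F a) 2 ν :=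
  ((memLp_two_uncurry_iff hF.1).1 hF).1

theorem _root_.MeasureTheory.MemLp.uncurry_flip [SFinite μ] [SFinite ν] {F : α → β → ℝ}
    (hF : MemLp (uncurry F) 2 (μ.prod ν)) : MemLp (uncurry fun b a => F a b) 2 (ν.prod μ) :=
  hF.comp_measurePreserving Measure.measurePreserving_swap

theorem measurable_integral_mul [SFinite ν] {H : α → β → ℝ} {f : β → ℝ}
    (hH : Measurable (uncurry H)) (hf : Measurable f) : Measurable fun a => ∫ b, H a b * f b ∂ν :=
  (hH.mul (hf.comp measurable_snd)).stronglyMeasurable.integral_prod_right'.measurable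

theorem memLp_integral_mul [SFinite ν] {H : α → β → ℝ} {f : β → ℝ}
    (hH : MemLp (uncurry H) 2 (μ.prod ν)) (hf : MemLp f 2 ν) :
    MemLp (fun a => ∫ b, H a b * f b ∂ν) 2 μ := by
  obtain ⟨hslice, hint⟩ := (memLp_two_uncurry_iff hH.1).1 hH
  have hm : AEStronglyMeasurable (fun a => ∫ b, H a b * f b ∂ν) μ :=
    (hH.1.mul hf.1.comp_snd).integral_prod_right'
  refine (memLp_two_iff_integrable_sq hm).2 <|
    (hint.mul_const (∫ b, f b ^ 2 ∂ν)).mono' (hm.pow 2) ?_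
  filter_upwards [hslice] with a ha
  rw [Real.norm_eq_abs, abs_of_nonneg (sq_nonneg _)]
  exact sq_integral_mul_le ha hf

theorem integral_sq_integral_mul_le [SFinite μ] [SFinite ν] {H : α → β → ℝ} {f : β → ℝ}
    (hH : MemLp (uncurry H) 2 (μ.prod ν)) (hf : MemLp f 2 ν) :
    ∫ a, (∫ b, H a b * f b ∂ν) ^ 2 ∂μ ≤ (∫ p, uncurry H p ^ 2 ∂μ.prod ν) * ∫ b, f b ^ 2 ∂ν := by
  obtain ⟨hslice, hint⟩ := (memLp_two_uncurry_iff hH.1).1 hH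
  rw [integral_prod _ hH.integrable_sq, ← integral_mul_const]
  refine integral_mono_ae (memLp_integral_mul hH hf).integrable_sq (hint.mul_const _) ?_
  filter_upwards [hslice] with a ha
  exact sq_integral_mul_le ha hf

theorem memLp_integral_kernel_mul [SFinite μ] [SFinite ν] [SFinite ρ]
    {H : β → γ → ℝ} {F : α → γ → ℝ} (hHm : Measurable (uncurry H)) (hFm : Measurable (uncurry F))
    (hH : MemLp (uncurry H) 2 (ν.prod ρ)) (hF : MemLp (uncurry F) 2 (μ.prod ρ)) :
    MemLp (uncurry fun a s => ∫ t, H s t * F a t ∂ρ) 2 (μ.prod ν) := by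
  have hm : StronglyMeasurable (uncurry fun a s => ∫ t, H s t * F a t ∂ρ) := by
    refine StronglyMeasurable.integral_prod_right'
      (f := fun q : (α × β) × γ => H q.1.2 q.2 * F q.1.1 q.2) ?_
    exact ((hHm.comp (measurable_fst.snd.prodMk measurable_snd)).mul
      (hFm.comp (measurable_fst.fst.prodMk measurable_snd))).stronglyMeasurable
  obtain ⟨hFslice, hFint⟩ := (memLp_two_uncurry_iff hF.1).1 hF
  refine (memLp_two_uncurry_iff hm.aestronglyMeasurable).2 ⟨?_, ?_⟩
  · filter_upwards [hFslice] with a ha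
    exact memLp_integral_mul hH ha
  · refine (hFint.const_mul (∫ p, uncurry H p ^ 2 ∂ν.prod ρ)).mono'
      (hm.pow 2).aestronglyMeasurable.integral_prod_right' ?_
    filter_upwards [hFslice] with a ha
    rw [Real.norm_eq_abs, abs_of_nonneg (integral_nonneg fun _ => sq_nonneg _)]
    exact integral_sq_integral_mul_le hH ha

theorem integral_mul_integral_mul_swap [SFinite μ] [SFinite ν] {G : α → ℝ} {F : α → β → ℝ}
    {h : β → ℝ} (hG : MemLp G 2 μ) (hF : MemLp (uncurry F) 2 (μ.prod ν)) (hh : MemLp h 2 ν) :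
    ∫ a, G a * ∫ b, F a b * h b ∂ν ∂μ = ∫ b, (∫ a, G a * F a b ∂μ) * h b ∂ν := by
  have hint : Integrable (uncurry fun a b => G a * F a b * h b) (μ.prod ν) :=
    (hF.integrable_mul (memLp_two_mul_prod hG hh)).congr
      (ae_of_all _ fun ⟨a, b⟩ => by simp only [Pi.mul_apply, uncurry_apply_pair]; ring)
  calc ∫ a, G a * ∫ b, F a b * h b ∂ν ∂μ = ∫ a, ∫ b, G a * F a b * h b ∂ν ∂μ := by
        simp_rw [← integral_const_mul, mul_assoc]
    _ = ∫ b, ∫ a, G a * F a b * h b ∂μ ∂ν := integral_integral_swap hint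
    _ = ∫ b, (∫ a, G a * F a b ∂μ) * h b ∂ν := by simp_rw [integral_mul_const]

end L2

section HilbertBasis

variable {α β : Type*} [MeasurableSpace α] [MeasurableSpace β] {μ : Measure α} {ν : Measure β}

structure IsL2HilbertBasis (ν : Measure β) (φ : ℕ → β → ℝ) : Prop where
  memLp : ∀ k, MemLp (φ k) 2 ν
  orthonormal : ∀ j k, ∫ t, φ j t * φ k t ∂ν = if j = k then 1 else 0
  parseval : ∀ f : β → ℝ, Measurable f → MemLp f 2 ν →
    ∑' k, (∫ t, f t * φ k t ∂ν) ^ 2 = ∫ t, f t ^ 2 ∂ν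

theorem integral_sum_mul {φ : ℕ → β → ℝ} (hφ : ∀ k, MemLp (φ k) 2 ν) (c : ℕ → ℝ) (N : ℕ)
    {g : β → ℝ} (hg : MemLp g 2 ν) :
    ∫ t, (∑ l ∈ range N, c l * φ l t) * g t ∂ν = ∑ l ∈ range N, c l * ∫ t, φ l t * g t ∂ν := by
  simp_rw [Finset.sum_mul, mul_assoc]
  rw [integral_finsetSum _ fun l _ => (integrable_mul_of_memLp_two (hφ l) hg).const_mul (c l)]
  simp_rw [integral_const_mul]

theorem integral_sub_sum_sq {φ : ℕ → β → ℝ} (hφ : ∀ k, MemLp (φ k) 2 ν)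
    (hon : ∀ j k, ∫ t, φ j t * φ k t ∂ν = if j = k then 1 else 0)
    {f : β → ℝ} (hf : MemLp f 2 ν) (N : ℕ) :
    ∫ t, (f t - ∑ j ∈ range N, (∫ u, f u * φ j u ∂ν) * φ j t) ^ 2 ∂ν
      = ∫ t, f t ^ 2 ∂ν - ∑ j ∈ range N, (∫ u, f u * φ j u ∂ν) ^ 2 := by
  set c : ℕ → ℝ := fun j => ∫ u, f u * φ j u ∂ν
  set S : β → ℝ := fun t => ∑ j ∈ range N, c j * φ j t
  have hS : MemLp S 2 ν := memLp_finsetSum _ fun j _ => (hφ j).const_mul (c j)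
  have hSf : ∫ t, S t * f t ∂ν = ∑ j ∈ range N, c j ^ 2 := by
    rw [integral_sum_mul hφ c N hf]
    refine sum_congr rfl fun j _ => ?_
    rw [sq, integral_congr_ae (ae_of_all _ fun t => mul_comm (φ j t) (f t))]
  have hSS : ∫ t, S t * S t ∂ν = ∑ j ∈ range N, c j ^ 2 := by
    rw [integral_sum_mul hφ c N hS]
    refine sum_congr rfl fun j hj => ?_
    rw [integral_congr_ae (ae_of_all _ fun t => mul_comm (φ j t) (S t)),
      integral_sum_mul hφ c N (hφ j)]
    simp [hon, hj, sq]
  have hfS : Integrable (fun t => 2 * (S t * f t)) ν :=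
    (integrable_mul_of_memLp_two hS hf).const_mul 2
  have hf2S : Integrable (fun t => f t ^ 2 - 2 * (S t * f t)) ν := hf.integrable_sq.sub hfS
  calc ∫ t, (f t - S t) ^ 2 ∂ν
      = ∫ t, f t ^ 2 - 2 * (S t * f t) + S t * S t ∂ν := by congr with t; ring
    _ = ∫ t, f t ^ 2 ∂ν - 2 * ∫ t, S t * f t ∂ν + ∫ t, S t * S t ∂ν := by
      rw [integral_add hf2S (integrable_mul_of_memLp_two hS hS),
        integral_sub hf.integrable_sq hfS, integral_const_mul]
    _ = ∫ t, f t ^ 2 ∂ν - ∑ j ∈ range N, c j ^ 2 := by rw [hSf, hSS]; ring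

namespace IsL2HilbertBasis

variable {φ : ℕ → β → ℝ}

theorem tendsto_integral_sub_sum_sq (hφ : IsL2HilbertBasis ν φ) {f : β → ℝ} (hfm : Measurable f)
    (hf : MemLp f 2 ν) :
    Tendsto (fun N => ∫ t, (f t - ∑ j ∈ range N, (∫ u, f u * φ j u ∂ν) * φ j t) ^ 2 ∂ν)
      atTop (nhds 0) := by
  simp_rw [integral_sub_sum_sq hφ.memLp hφ.orthonormal hf]
  have bessel : ∀ N, ∑ j ∈ range N, (∫ u, f u * φ j u ∂ν) ^ 2 ≤ ∫ t, f t ^ 2 ∂ν := fun N => by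
    have h0 : 0 ≤ ∫ t, (f t - ∑ j ∈ range N, (∫ u, f u * φ j u ∂ν) * φ j t) ^ 2 ∂ν :=
      integral_nonneg fun t => sq_nonneg _
    linarith [integral_sub_sum_sq hφ.memLp hφ.orthonormal hf N]
  have hsum := (summable_of_sum_range_le (fun _ => sq_nonneg _) bessel).hasSum
  rw [hφ.parseval f hfm hf] at hsum
  have := hsum.tendsto_sum_nat.const_sub (∫ t, f t ^ 2 ∂ν)
  rwa [sub_self] at this

theorem ae_eq_of_integral_mul_eq (hφ : IsL2HilbertBasis ν φ) {f g : β → ℝ}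
    (hfm : Measurable f) (hgm : Measurable g) (hf : MemLp f 2 ν) (hg : MemLp g 2 ν)
    (hfg : ∀ k, ∫ t, f t * φ k t ∂ν = ∫ t, g t * φ k t ∂ν) : f =ᵐ[ν] g := by
  have hcoef : ∀ k, ∫ t, (f t - g t) * φ k t ∂ν = 0 := fun k => by
    simp_rw [sub_mul]
    rw [integral_sub (integrable_mul_of_memLp_two hf (hφ.memLp k))
      (integrable_mul_of_memLp_two hg (hφ.memLp k)), hfg, sub_self]
  have hsq : ∫ t, (f t - g t) ^ 2 ∂ν = 0 := by
    rw [← hφ.parseval (fun t => f t - g t) (hfm.sub hgm) (hf.sub hg)]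
    simp [hcoef]
  filter_upwards [(integral_eq_zero_iff_of_nonneg (fun t => sq_nonneg (f t - g t))
    (hf.sub hg).integrable_sq).1 hsq] with t ht
  simpa [sub_eq_zero] using ht

theorem tendsto_integral_integral_sub_sum_sq [SFinite ν] (hφ : IsL2HilbertBasis ν φ)
    {H : α → β → ℝ} (hHm : Measurable (uncurry H)) (hH : MemLp (uncurry H) 2 (μ.prod ν)) :
    Tendsto (fun M => ∫ a, ∫ b,
        (H a b - ∑ k ∈ range M, (∫ t, H a t * φ k t ∂ν) * φ k b) ^ 2 ∂ν ∂μ) atTop (nhds 0) := by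
  obtain ⟨hslice, hint⟩ := (memLp_two_uncurry_iff hH.1).1 hH
  have hslicem : ∀ a, Measurable (H a) := fun a => hHm.comp measurable_prodMk_left
  have hmeas : ∀ M, AEStronglyMeasurable (fun a => ∫ b,
      (H a b - ∑ k ∈ range M, (∫ t, H a t * φ k t ∂ν) * φ k b) ^ 2 ∂ν) μ := by
    intro M
    have hcoef : ∀ k, AEStronglyMeasurable (fun a => ∫ t, H a t * φ k t ∂ν) μ := fun k =>
      (hH.1.mul (hφ.memLp k).1.comp_snd).integral_prod_right'
    refine AEStronglyMeasurable.integral_prod_right' (f := fun p : α × β =>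
      (H p.1 p.2 - ∑ k ∈ range M, (∫ t, H p.1 t * φ k t ∂ν) * φ k p.2) ^ 2) ?_
    exact (hH.1.sub (Finset.aestronglyMeasurable_fun_sum _ fun k _ =>
      (hcoef k).comp_fst.mul (hφ.memLp k).1.comp_snd)).pow 2
  have hlim := tendsto_integral_of_dominated_convergence _ hmeas hint ?_
    (by filter_upwards [hslice] with a ha using hφ.tendsto_integral_sub_sum_sq (hslicem a) ha)
  · simpa using hlim
  intro M
  filter_upwards [hslice] with a ha
  rw [Real.norm_eq_abs, abs_of_nonneg (integral_nonneg fun _ => sq_nonneg _),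
    integral_sub_sum_sq hφ.memLp hφ.orthonormal ha]
  exact sub_le_self _ (sum_nonneg fun _ _ => sq_nonneg _)

end IsL2HilbertBasis

end HilbertBasis

theorem integral_mul_eq_zero_of_condExp_eq_zero {Ω : Type*} {m m₀ : MeasurableSpace Ω}
    {P : Measure Ω} [IsFiniteMeasure P] (hm : m ≤ m₀) {G e : Ω → ℝ} (hG : StronglyMeasurable[m] G)
    (hGe : Integrable (fun ω => G ω * e ω) P) (he : Integrable e P) (hcond : P[e|m] =ᵐ[P] 0) :
    ∫ ω, G ω * e ω ∂P = 0 := by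
  change ∫ ω, (G * e) ω ∂P = 0
  rw [← integral_condExp hm]
  refine integral_eq_zero_of_ae ?_
  filter_upwards [condExp_mul_of_stronglyMeasurable_left hG hGe he, hcond] with ω h1 h2
  rw [h1, Pi.mul_apply, h2]
  simp

section Model

variable {Ω β : Type*} [MeasurableSpace Ω] [MeasurableSpace β] {P : Measure Ω} {ν : Measure β}

theorem memLp_integral_left [IsFiniteMeasure P] [SFinite ν] {X : Ω → β → ℝ}
    (hX : MemLp (uncurry X) 2 (P.prod ν)) : MemLp (fun t => ∫ ω, X ω t ∂P) 2 ν := by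
  simpa using memLp_integral_mul hX.uncurry_flip (memLp_const (1 : ℝ))

theorem measurable_uncurry_sub_mean [SFinite P] {X : Ω → β → ℝ} {EX : β → ℝ}
    (hEX : ∀ t, EX t = ∫ ω, X ω t ∂P) (hX : Measurable (uncurry X)) :
    Measurable (uncurry fun ω t => X ω t - EX t) := by
  obtain rfl : EX = _ := funext hEX
  exact hX.sub ((hX.stronglyMeasurable.integral_prod_left).measurable.comp measurable_snd)

theorem memLp_uncurry_sub_mean [IsProbabilityMeasure P] [SFinite ν] {X : Ω → β → ℝ} {EX : β → ℝ}
    (hEX : ∀ t, EX t = ∫ ω, X ω t ∂P) (hX : MemLp (uncurry X) 2 (P.prod ν)) :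
    MemLp (uncurry fun ω t => X ω t - EX t) 2 (P.prod ν) := by
  obtain rfl : EX = _ := funext hEX
  exact hX.sub ((memLp_integral_left hX).comp_measurePreserving measurePreserving_snd)

theorem integral_integral_sub_mean_mul_eq_zero [IsProbabilityMeasure P] [SFinite ν] {X : Ω → β → ℝ}
    {EX ψ : β → ℝ} (hEX : ∀ t, EX t = ∫ ω, X ω t ∂P)
    (hXc : MemLp (uncurry fun ω t => X ω t - EX t) 2 (P.prod ν)) (hψ : MemLp ψ 2 ν) :
    ∫ ω, ∫ t, (X ω t - EX t) * ψ t ∂ν ∂P = 0 := by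
  have h := integral_mul_integral_mul_swap (memLp_const 1) hXc hψ
  simp only [one_mul] at h
  rw [h]
  refine integral_eq_zero_of_ae ?_
  filter_upwards [hXc.uncurry_flip.ae_memLp_slice] with t ht
  have hXt : Integrable (fun ω => X ω t) P :=
    ((ht.integrable one_le_two).add (integrable_const (EX t))).congr
      (ae_of_all _ fun ω => sub_add_cancel (X ω t) (EX t))
  simp [integral_sub hXt (integrable_const _), hEX]

theorem integral_integral_sub_mul_mul_eq_zero_of_condExp [IsProbabilityMeasure P] [SFinite ν]
    {X : Ω → β → ℝ} {c ψ : β → ℝ} {e : Ω → ℝ} (hXm : Measurable X)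
    (hXc : MemLp (uncurry fun ω t => X ω t - c t) 2 (P.prod ν)) (hψ : MemLp ψ 2 ν)
    (he : MemLp e 2 P) (hcond : P[e|MeasurableSpace.comap X inferInstance] =ᵐ[P] 0) :
    ∫ ω, (∫ t, (X ω t - c t) * ψ t ∂ν) * e ω ∂P = 0 := by
  have horth : ∀ᵐ t ∂ν, ∫ ω, e ω * (X ω t - c t) ∂P = 0 := by
    filter_upwards [hXc.uncurry_flip.ae_memLp_slice] with t ht
    have hGm : StronglyMeasurable[MeasurableSpace.comap X inferInstance] fun ω => X ω t - c t :=
      (((measurable_pi_apply t).comp (comap_measurable X)).sub_const (c t)).stronglyMeasurable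
    rw [integral_congr_ae (ae_of_all _ fun ω => mul_comm _ _)]
    exact integral_mul_eq_zero_of_condExp_eq_zero hXm.comap_le hGm
      (integrable_mul_of_memLp_two ht he) (he.integrable one_le_two) hcond
  rw [integral_congr_ae (ae_of_all _ fun ω => mul_comm _ _),
    integral_mul_integral_mul_swap he hXc hψ]
  refine integral_eq_zero_of_ae ?_
  filter_upwards [horth] with t ht
  simp [ht]

theorem integral_integral_mul_mul_eq_of_eigen [SFinite P] [SFinite ν] {Xc : Ω → β → ℝ}
    {K : β → β → ℝ} {κ : ℝ} {φ : β → ℝ} (hXc : MemLp (uncurry Xc) 2 (P.prod ν)) (hφ : MemLp φ 2 ν)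
    (hK : ∀ s t, K s t = ∫ ω, Xc ω s * Xc ω t ∂P)
    (heig : ∀ᵐ s ∂ν, ∫ t, K s t * φ t ∂ν = κ * φ s) :
    ∀ᵐ t ∂ν, ∫ ω, (∫ u, Xc ω u * φ u ∂ν) * Xc ω t ∂P = κ * φ t := by
  filter_upwards [heig, hXc.uncurry_flip.ae_memLp_slice] with t heigt ht
  rw [integral_congr_ae (ae_of_all _ fun ω => mul_comm _ _),
    integral_mul_integral_mul_swap ht hXc hφ, ← heigt]
  simp_rw [hK]

theorem integral_mul_integral_kernel_mul_eq [SFinite P] [SFinite ν] {G : Ω → ℝ} {Xc : Ω → β → ℝ}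
    {b : β → β → ℝ} {c ψ : β → ℝ} (hG : MemLp G 2 P) (hXc : MemLp (uncurry Xc) 2 (P.prod ν))
    (hb : MemLp (uncurry b) 2 (ν.prod ν))
    (hT : MemLp (uncurry fun ω s => ∫ t, b s t * Xc ω t ∂ν) 2 (P.prod ν)) (hψ : MemLp ψ 2 ν)
    (hc : ∀ᵐ t ∂ν, ∫ ω, G ω * Xc ω t ∂P = c t) :
    ∫ ω, G ω * ∫ s, (∫ t, b s t * Xc ω t ∂ν) * ψ s ∂ν ∂P
      = ∫ s, (∫ t, b s t * c t ∂ν) * ψ s ∂ν := by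
  rw [integral_mul_integral_mul_swap hG hT hψ]
  refine integral_congr_ae ?_
  filter_upwards [hb.ae_memLp_slice] with s hs
  congr 1
  calc ∫ ω, G ω * ∫ t, b s t * Xc ω t ∂ν ∂P = ∫ ω, G ω * ∫ t, Xc ω t * b s t ∂ν ∂P := by
        simp_rw [mul_comm (b s _)]
    _ = ∫ t, (∫ ω, G ω * Xc ω t ∂P) * b s t ∂ν := integral_mul_integral_mul_swap hG hXc hs
    _ = ∫ t, b s t * c t ∂ν := integral_congr_ae <| by
        filter_upwards [hc] with t ht
        rw [ht, mul_comm]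

theorem ae_integral_mul_eq_add [SFinite ν] {Y T 𝓔 : Ω → β → ℝ} {EY ψ : β → ℝ}
    (hY : MemLp (uncurry Y) 2 (P.prod ν)) (hT : MemLp (uncurry T) 2 (P.prod ν))
    (hEY : MemLp EY 2 ν) (hψ : MemLp ψ 2 ν)
    (hmodel : ∀ᵐ ω ∂P, ∀ᵐ s ∂ν, Y ω s = EY s + T ω s + 𝓔 ω s) :
    ∀ᵐ ω ∂P, ∫ s, Y ω s * ψ s ∂ν
      = ∫ s, EY s * ψ s ∂ν + ∫ s, T ω s * ψ s ∂ν + ∫ s, 𝓔 ω s * ψ s ∂ν := by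
  filter_upwards [hmodel, hY.ae_memLp_slice, hT.ae_memLp_slice] with ω hω hYω hTω
  exact integral_mul_eq_add_of_ae_eq hYω hEY hTω hψ hω

theorem memLp_integral_mul_of_ae_eq_add [IsFiniteMeasure P] [SFinite ν] {Y T 𝓔 : Ω → β → ℝ}
    {EY ψ : β → ℝ} (hY : MemLp (uncurry Y) 2 (P.prod ν)) (hT : MemLp (uncurry T) 2 (P.prod ν))
    (hEY : MemLp EY 2 ν) (hψ : MemLp ψ 2 ν)
    (hmodel : ∀ᵐ ω ∂P, ∀ᵐ s ∂ν, Y ω s = EY s + T ω s + 𝓔 ω s) :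
    MemLp (fun ω => ∫ s, 𝓔 ω s * ψ s ∂ν) 2 P := by
  refine (((memLp_integral_mul hY hψ).sub (memLp_const (∫ s, EY s * ψ s ∂ν))).sub
    (memLp_integral_mul hT hψ)).ae_eq ?_
  filter_upwards [ae_integral_mul_eq_add hY hT hEY hψ hmodel] with ω hω
  simp only [Pi.sub_apply, hω]
  ring

theorem integral_crossCov_mul_eq [IsProbabilityMeasure P] [SFinite ν]
    {X Y 𝓔 : Ω → β → ℝ} {EX EY φ ψ : β → ℝ} {b K : β → β → ℝ} {κ : ℝ}
    (hXm : Measurable X) (hbm : Measurable (uncurry b))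
    (hXcm : Measurable (uncurry fun ω t => X ω t - EX t)) (hEX : ∀ t, EX t = ∫ ω, X ω t ∂P)
    (hXc : MemLp (uncurry fun ω t => X ω t - EX t) 2 (P.prod ν))
    (hY : MemLp (uncurry Y) 2 (P.prod ν)) (hEY : MemLp EY 2 ν)
    (hb : MemLp (uncurry b) 2 (ν.prod ν))
    (hmodel : ∀ᵐ ω ∂P, ∀ᵐ s ∂ν, Y ω s = EY s + (∫ t, b s t * (X ω t - EX t) ∂ν) + 𝓔 ω s)
    (h𝓔 : P[fun ω => ∫ s, 𝓔 ω s * ψ s ∂ν|MeasurableSpace.comap X inferInstance] =ᵐ[P] 0)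
    (hK : ∀ s t, K s t = ∫ ω, (X ω s - EX s) * (X ω t - EX t) ∂P)
    (heig : ∀ᵐ s ∂ν, ∫ t, K s t * φ t ∂ν = κ * φ s) (hφ : MemLp φ 2 ν) (hψ : MemLp ψ 2 ν) :
    ∫ s, (∫ ω, (∫ t, (X ω t - EX t) * φ t ∂ν) * Y ω s ∂P) * ψ s ∂ν
      = κ * ∫ s, (∫ t, b s t * φ t ∂ν) * ψ s ∂ν := by
  set Xc : Ω → β → ℝ := fun ω t => X ω t - EX t
  set ξ : Ω → ℝ := fun ω => ∫ t, Xc ω t * φ t ∂ν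
  set T : Ω → β → ℝ := fun ω s => ∫ t, b s t * Xc ω t ∂ν
  set e : Ω → ℝ := fun ω => ∫ s, 𝓔 ω s * ψ s ∂ν
  have hT : MemLp (uncurry T) 2 (P.prod ν) := memLp_integral_kernel_mul hbm hXcm hb hXc
  have hξ : MemLp ξ 2 P := memLp_integral_mul hXc hφ
  have hTψ : MemLp (fun ω => ∫ s, T ω s * ψ s ∂ν) 2 P := memLp_integral_mul hT hψ
  have hdecomp := ae_integral_mul_eq_add hY hT hEY hψ hmodel
  have he : MemLp e 2 P := memLp_integral_mul_of_ae_eq_add hY hT hEY hψ hmodel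
  have hξT : ∫ ω, ξ ω * ∫ s, T ω s * ψ s ∂ν ∂P = ∫ s, (∫ t, b s t * (κ * φ t) ∂ν) * ψ s ∂ν :=
    integral_mul_integral_kernel_mul_eq hξ hXc hb hT hψ
      (integral_integral_mul_mul_eq_of_eigen hXc hφ hK heig)
  have hEYξ : Integrable (fun ω => (∫ s, EY s * ψ s ∂ν) * ξ ω) P :=
    (hξ.integrable one_le_two).const_mul _
  have hξTint := integrable_mul_of_memLp_two hξ hTψ
  calc ∫ s, (∫ ω, ξ ω * Y ω s ∂P) * ψ s ∂ν
      = ∫ ω, ξ ω * ∫ s, Y ω s * ψ s ∂ν ∂P := (integral_mul_integral_mul_swap hξ hY hψ).symm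
    _ = ∫ ω, (∫ s, EY s * ψ s ∂ν) * ξ ω + ξ ω * ∫ s, T ω s * ψ s ∂ν + ξ ω * e ω ∂P := by
        refine integral_congr_ae ?_
        filter_upwards [hdecomp] with ω hω
        rw [hω]
        ring
    _ = (∫ s, EY s * ψ s ∂ν) * (∫ ω, ξ ω ∂P) + ∫ ω, ξ ω * ∫ s, T ω s * ψ s ∂ν ∂P
          + ∫ ω, ξ ω * e ω ∂P := by
        rw [integral_add (f := fun ω => (∫ s, EY s * ψ s ∂ν) * ξ ω + ξ ω * ∫ s, T ω s * ψ s ∂ν)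
          (hEYξ.add hξTint) (integrable_mul_of_memLp_two hξ he), integral_add hEYξ hξTint,
          integral_const_mul]
    _ = κ * ∫ s, (∫ t, b s t * φ t ∂ν) * ψ s ∂ν := by
        rw [integral_integral_sub_mean_mul_eq_zero hEX hXc hφ, hξT,
          integral_integral_sub_mul_mul_eq_zero_of_condExp hXm hXc hφ he h𝓔, mul_zero, zero_add,
          add_zero]
        simp_rw [mul_left_comm _ κ, integral_const_mul, mul_assoc, integral_const_mul]

theorem crossCov_ae_eq_const_mul [IsProbabilityMeasure P] [SFinite ν]
    {X Y 𝓔 : Ω → β → ℝ} {EX EY : β → ℝ} {b K : β → β → ℝ} {κ : ℝ} {φ : ℕ → β → ℝ} {k : ℕ}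
    (hφ : IsL2HilbertBasis ν φ) (hφm : ∀ j, Measurable (φ j))
    (hXm : Measurable (uncurry X)) (hYm : Measurable (uncurry Y)) (hbm : Measurable (uncurry b))
    (hEX : ∀ t, EX t = ∫ ω, X ω t ∂P) (hX : MemLp (uncurry X) 2 (P.prod ν))
    (hY : MemLp (uncurry Y) 2 (P.prod ν)) (hEY : MemLp EY 2 ν)
    (hb : MemLp (uncurry b) 2 (ν.prod ν))
    (hmodel : ∀ᵐ ω ∂P, ∀ᵐ s ∂ν, Y ω s = EY s + (∫ t, b s t * (X ω t - EX t) ∂ν) + 𝓔 ω s)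
    (h𝓔 : ∀ j,
      P[fun ω => ∫ s, 𝓔 ω s * φ j s ∂ν|MeasurableSpace.comap X inferInstance] =ᵐ[P] 0)
    (hK : ∀ s t, K s t = ∫ ω, (X ω s - EX s) * (X ω t - EX t) ∂P)
    (heig : ∀ᵐ s ∂ν, ∫ t, K s t * φ k t ∂ν = κ * φ k s) :
    (fun s => ∫ ω, (∫ t, (X ω t - EX t) * φ k t ∂ν) * Y ω s ∂P)
      =ᵐ[ν] fun s => κ * ∫ t, b s t * φ k t ∂ν := by
  have hXcm := measurable_uncurry_sub_mean hEX hXm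
  have hXc := memLp_uncurry_sub_mean hEX hX
  have hξm := measurable_integral_mul (ν := ν) (H := fun ω t => X ω t - EX t) hXcm (hφm k)
  have hξL2 := memLp_integral_mul (H := fun ω t => X ω t - EX t) hXc (hφ.memLp k)
  refine hφ.ae_eq_of_integral_mul_eq ?_ ((measurable_integral_mul hbm (hφm k)).const_mul κ) ?_
    ((memLp_integral_mul hb (hφ.memLp k)).const_mul κ) fun j => ?_
  · simpa only [mul_comm] using
      measurable_integral_mul (H := fun s ω => Y ω s) (hYm.comp measurable_swap) hξm
  · simpa only [mul_comm] using memLp_integral_mul hY.uncurry_flip hξL2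
  · have hXm' : Measurable X :=
      measurable_pi_lambda X fun t => hXm.comp (measurable_id.prodMk measurable_const)
    rw [integral_crossCov_mul_eq hXm' hbm hXcm hEX hXc hY hEY hb hmodel (h𝓔 j) hK heig
      (hφ.memLp k) (hφ.memLp j)]
    simp_rw [mul_assoc, integral_const_mul]

end Model

end FunctionalLinearModel

open FunctionalLinearModel

/-- Characterization of the coefficient function: in the functional linear model
`E(Y|X)(s) = E Y(s) + ∫ b(s,t)(X(t) − E X(t)) dt`, with PC scores
`ξ_k = ⟨X − E X, φ_k⟩` and coefficients `b_{j,k} = ∬ b (φ_j ⊗ φ_k)`, for every `k` the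
function `s ↦ E[ξ_k Y(s)]` equals `κ_k Σ_j b_{j,k} φ_j` in `L²(I)`, and consequently
`b = Σ_k κ_k⁻¹ E[ξ_k Y] ⊗ φ_k` in `L²(I²)` (both series converging in the respective
`L²` norms). -/
theorem coefficient_characterization {Ω : Type} [MeasurableSpace Ω]
    (P : Measure Ω) [IsProbabilityMeasure P]
    (X Y 𝓔 : Ω → ℝ → ℝ)
    (hXmeas : Measurable (fun p : Ω × ℝ => X p.1 p.2))
    (hYmeas : Measurable (fun p : Ω × ℝ => Y p.1 p.2))
    (hXL2 : ∀ᵐ ω ∂P, MemLp (X ω) 2 μI)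
    (hYL2 : ∀ᵐ ω ∂P, MemLp (Y ω) 2 μI)
    (hEX2 : Integrable (fun ω => ∫ t, (X ω t) ^ 2 ∂μI) P)
    (hEY2 : Integrable (fun ω => ∫ s, (Y ω s) ^ 2 ∂μI) P)
    (EX EY : ℝ → ℝ)
    (hEX : ∀ t, EX t = ∫ ω, X ω t ∂P)
    (hEY : ∀ s, EY s = ∫ ω, Y ω s ∂P)
    (b : ℝ → ℝ → ℝ)
    (hbmeas : Measurable (fun p : ℝ × ℝ => b p.1 p.2))
    (hbL2 : MemLp (fun p : ℝ × ℝ => b p.1 p.2) 2 (μI.prod μI))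
    -- the functional linear model `Y = E Y + ∫ b(s,t)(X(t) − E X(t)) dt + 𝓔`
    (hmodel : ∀ᵐ ω ∂P, ∀ᵐ s ∂μI,
      Y ω s = EY s + (∫ t, b s t * (X ω t - EX t) ∂μI) + 𝓔 ω s)
    -- `E(𝓔 | X) = 0`, expressed through inner products with `L²` test functions
    (h𝓔cond : ∀ f : ℝ → ℝ, Measurable f → MemLp f 2 μI →
      P[fun ω => ip (𝓔 ω) f | MeasurableSpace.comap X inferInstance] =ᵐ[P] 0)
    -- spectral expansion of the covariance of `X`
    (K : ℝ → ℝ → ℝ)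
    (hK : ∀ s t, K s t = ∫ ω, (X ω s - EX s) * (X ω t - EX t) ∂P)
    (κ : ℕ → ℝ) (hκpos : ∀ k, 0 < κ k)
    (φ : ℕ → ℝ → ℝ)
    (hφmeas : ∀ k, Measurable (φ k))
    (hφL2 : ∀ k, MemLp (φ k) 2 μI)
    (hφon : ∀ j k, ip (φ j) (φ k) = if j = k then 1 else 0)
    (hφcomplete : ∀ f : ℝ → ℝ, Measurable f → MemLp f 2 μI →
      (∑' k, (ip f (φ k)) ^ 2) = ∫ t, (f t) ^ 2 ∂μI)
    (heig : ∀ k, ∀ᵐ s ∂μI, (∫ t, K s t * φ k t ∂μI) = κ k * φ k s) :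
    (∀ k : ℕ,
      Tendsto (fun N : ℕ => ∫ s,
          ((∫ ω, ip (fun t => X ω t - EX t) (φ k) * Y ω s ∂P)
            - κ k * ∑ j ∈ Finset.range N,
                (∫ s', (∫ t, b s' t * φ k t ∂μI) * φ j s' ∂μI) * φ j s) ^ 2 ∂μI)
        atTop (nhds 0)) ∧
    Tendsto (fun M : ℕ => ∫ s, ∫ t,
        (b s t - ∑ k ∈ Finset.range M,
            (κ k)⁻¹ * (∫ ω, ip (fun u => X ω u - EX u) (φ k) * Y ω s ∂P) * φ k t) ^ 2
        ∂μI ∂μI)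
      atTop (nhds 0) := by
  have hX : MemLp (uncurry X) 2 (P.prod μI) :=
    (memLp_two_uncurry_iff hXmeas.aestronglyMeasurable).2 ⟨hXL2, hEX2⟩
  have hY : MemLp (uncurry Y) 2 (P.prod μI) :=
    (memLp_two_uncurry_iff hYmeas.aestronglyMeasurable).2 ⟨hYL2, hEY2⟩
  have hEYL2 : MemLp EY 2 μI := by
    rw [funext hEY]
    exact memLp_integral_left hY
  have hφ : IsL2HilbertBasis μI φ := ⟨hφL2, hφon, hφcomplete⟩
  have hA : ∀ k, (fun s => ∫ ω, ip (fun t => X ω t - EX t) (φ k) * Y ω s ∂P)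
      =ᵐ[μI] fun s => κ k * ∫ t, b s t * φ k t ∂μI := fun k =>
    crossCov_ae_eq_const_mul hφ hφmeas hXmeas hYmeas hbmeas hEX hX hY hEYL2 hbL2 hmodel
      (fun j => h𝓔cond _ (hφmeas j) (hφL2 j)) hK (heig k)
  refine ⟨fun k => ?_, ?_⟩
  · have h := (hφ.tendsto_integral_sub_sum_sq (measurable_integral_mul (ν := μI) hbmeas (hφmeas k))
      (memLp_integral_mul hbL2 (hφL2 k))).const_mul (κ k ^ 2)
    rw [mul_zero] at h
    refine h.congr fun N => ?_
    rw [← integral_const_mul]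
    refine integral_congr_ae ?_
    filter_upwards [hA k] with s hs
    rw [hs]
    ring
  · refine (hφ.tendsto_integral_integral_sub_sum_sq hbmeas hbL2).congr fun M => ?_
    refine integral_congr_ae ?_
    filter_upwards [ae_all_iff.2 hA] with s hs
    refine integral_congr_ae (ae_of_all _ fun t => ?_)
    dsimp only
    congr 2
    refine sum_congr rfl fun k _ => ?_
    rw [hs k, inv_mul_cancel_left₀ (hκpos k).ne']

end
end
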